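/- arXiv:2503.12371 — 6 statements merged into one kernel-verified Lean document; each statement's English description precedes it below -/
import Mathlib

section
/- Let R > 0, β ∈ (0,1/4), C̃ = ∫_β^{1/2} g(t) dt > 0, and assume f(Rφ(β))/R > 1/(2φ(β)C̃). Then for every v ∈ K with ‖v‖ = 1 one has ∫₀¹ f(R v(t)) g(t) v(t) dt > R. -/
open Set

/-- `φ(t) = t(1-2t)`. -/
noncomputable def phi (t : ℝ) : ℝ := t * (1 - 2 * t)

/-- The `H¹₀` (energetic) norm `‖u‖ = (∫₀¹ u'(t)² dt)^{1/2}`. -/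
noncomputable def normH (u : ℝ → ℝ) : ℝ := Real.sqrt (∫ t in (0:ℝ)..1, deriv u t ^ 2)

/-- Membership in the cone `K`: continuously differentiable on `[0,1]`, vanishing at the
endpoints, symmetric about `1/2`, nondecreasing on `[0,1/2]`, and satisfying the Harnack
inequality `u(t) ≥ φ(t)‖u‖` on `[0,1/2]`. -/
def memK (u : ℝ → ℝ) : Prop :=
  (∀ t ∈ Icc (0:ℝ) 1, DifferentiableAt ℝ u t) ∧
  ContinuousOn (deriv u) (Icc (0:ℝ) 1) ∧
  u 0 = 0 ∧ u 1 = 0 ∧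
  (∀ t ∈ Icc (0:ℝ) 1, u t = u (1 - t)) ∧
  MonotoneOn u (Icc (0:ℝ) (1/2)) ∧
  (∀ t ∈ Icc (0:ℝ) (1/2), phi t * normH u ≤ u t)

/-!
On `[β, 1 - β]` the Harnack inequality at `β`, monotonicity and symmetry of `v` give
`v ≥ φ(β)`, so there the integrand is at least `f(Rφ(β)) φ(β) g`, while on the rest of `[0,1]`
it is nonnegative. The symmetry of `g` gives `∫_β^{1-β} g = 2C̃`, so the integral is at least
`2 φ(β) C̃ f(Rφ(β))`, which exceeds `R` by hypothesis.
-/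

open MeasureTheory

lemma phi_pos {t : ℝ} (ht : t ∈ Ioo (0 : ℝ) (1 / 2)) : 0 < phi t :=
  mul_pos ht.1 (by linarith [ht.2])

lemma phi_zero : phi 0 = 0 := by simp [phi]

lemma uIcc_self_one_sub_subset {β : ℝ} (hβ : β ∈ Icc (0 : ℝ) 1) : uIcc β (1 - β) ⊆ uIcc 0 1 := by
  rw [uIcc_of_le zero_le_one]
  exact uIcc_subset_Icc hβ ⟨by linarith [hβ.2], by linarith [hβ.1]⟩

theorem intervalIntegrable_of_norm_le {E : Type*} [NormedAddCommGroup E] {g : ℝ → E}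
    {a b M : ℝ} (hg : AEStronglyMeasurable g volume) (hbdd : ∀ t ∈ uIcc a b, ‖g t‖ ≤ M) :
    IntervalIntegrable g volume a b :=
  IntegrableOn.intervalIntegrable <|
    Measure.integrableOn_of_bounded measure_Icc_lt_top.ne hg
      ((ae_restrict_mem measurableSet_Icc).mono hbdd)

theorem integral_eq_two_smul_integral_of_symm {E : Type*} [NormedAddCommGroup E]
    [NormedSpace ℝ E] {g : ℝ → E} {a c : ℝ}
    (hg : IntervalIntegrable g volume a (2 * c - a))
    (hsymm : ∀ t ∈ uIcc a c, g (2 * c - t) = g t) :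
    ∫ t in a..(2 * c - a), g t = (2 : ℝ) • ∫ t in a..c, g t := by
  have hc : c ∈ uIcc a (2 * c - a) := by
    rcases le_total a c with h | h
    · exact Icc_subset_uIcc ⟨h, by linarith⟩
    · exact Icc_subset_uIcc' ⟨by linarith, h⟩
  have hreflect : ∫ t in c..(2 * c - a), g t = ∫ t in a..c, g t := by
    rw [← intervalIntegral.integral_congr hsymm, intervalIntegral.integral_comp_sub_left]
    ring_nf
  rw [← intervalIntegral.integral_add_adjacent_intervals (hg.mono_set (uIcc_subset_uIcc_left hc))
    (hg.mono_set (uIcc_subset_uIcc_right hc)), hreflect, two_smul]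

theorem monotoneOn_comp_const_mul_mul_self {f : ℝ → ℝ} (hfmono : MonotoneOn f (Ici 0))
    (hf0 : 0 ≤ f 0) {R : ℝ} (hR : 0 ≤ R) : MonotoneOn (fun x => f (R * x) * x) (Ici 0) := by
  have hRx : MapsTo (R * ·) (Ici (0 : ℝ)) (Ici 0) := fun x hx => mul_nonneg hR hx
  refine MonotoneOn.mul (hfmono.comp (fun x _ y _ hxy => by gcongr) hRx) monotoneOn_id
    (fun x hx => hf0.trans (hfmono self_mem_Ici (hRx hx) (hRx hx))) (fun x hx => hx)

namespace memK

variable {v : ℝ → ℝ}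

theorem continuousOn (hv : memK v) : ContinuousOn v (Icc 0 1) :=
  fun t ht => (hv.1 t ht).continuousAt.continuousWithinAt

theorem phi_mul_normH_le_of_mem_Icc (hv : memK v) {β : ℝ} (hβ : β ∈ Icc (0 : ℝ) (1 / 2))
    {t : ℝ} (ht : t ∈ Icc β (1 - β)) : phi β * normH v ≤ v t := by
  obtain ⟨-, -, -, -, hsymm, hmono, hharnack⟩ := hv
  refine (hharnack β hβ).trans ?_
  rcases le_total t (1 / 2) with htle | htge
  · exact hmono hβ ⟨hβ.1.trans ht.1, htle⟩ ht.1
  · rw [hsymm t ⟨by linarith [hβ.2], by linarith [hβ.1, ht.2]⟩]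
    exact hmono hβ ⟨by linarith [hβ.1, ht.2], by linarith⟩ (by linarith [ht.2])

theorem nonneg (hv : memK v) {t : ℝ} (ht : t ∈ Icc (0 : ℝ) 1) : 0 ≤ v t := by
  simpa [phi_zero] using
    hv.phi_mul_normH_le_of_mem_Icc ⟨le_rfl, by norm_num⟩ (t := t) (by simpa using ht)

theorem intervalIntegrable_comp_mul_mul {f g : ℝ → ℝ} (hv : memK v) (hf : Continuous f)
    (hg : IntervalIntegrable g volume 0 1) (R : ℝ) :
    IntervalIntegrable (fun t => f (R * v t) * g t * v t) volume 0 1 := by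
  have hv_cont := hv.continuousOn
  rw [← uIcc_of_le zero_le_one] at hv_cont
  exact (hg.continuousOn_mul (hf.comp_continuousOn (continuousOn_const.mul hv_cont))).mul_continuousOn
    hv_cont

theorem mul_integral_le_integral {f g : ℝ → ℝ} (hv : memK v) (hf : Continuous f)
    (hfmono : MonotoneOn f (Ici 0)) (hf0 : 0 ≤ f 0) (hg : IntervalIntegrable g volume 0 1)
    (hgnonneg : ∀ t ∈ Icc (0 : ℝ) 1, 0 ≤ g t) {R : ℝ} (hR : 0 ≤ R) {β : ℝ}
    (hβ : β ∈ Icc (0 : ℝ) (1 / 2)) :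
    f (R * (phi β * normH v)) * (phi β * normH v) * ∫ t in β..(1 - β), g t ≤
      ∫ t in (0 : ℝ)..1, f (R * v t) * g t * v t := by
  set c := phi β * normH v
  have hmul := monotoneOn_comp_const_mul_mul_self hfmono hf0 hR
  have hc : 0 ≤ c := mul_nonneg (mul_nonneg hβ.1 (by linarith [hβ.2])) (Real.sqrt_nonneg _)
  have hF_int := hv.intervalIntegrable_comp_mul_mul hf hg R
  have hsub : Icc β (1 - β) ⊆ Icc 0 1 := Icc_subset_Icc hβ.1 (by linarith [hβ.1])
  have huIcc := uIcc_self_one_sub_subset (hsub ⟨le_rfl, by linarith [hβ.2]⟩)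
  rw [← intervalIntegral.integral_const_mul]
  calc ∫ t in β..(1 - β), f (R * c) * c * g t
      ≤ ∫ t in β..(1 - β), f (R * v t) * g t * v t := by
        refine intervalIntegral.integral_mono_on (by linarith [hβ.2])
          ((hg.mono_set huIcc).const_mul _) (hF_int.mono_set huIcc) fun t ht => ?_
        have hv_ge : c ≤ v t := hv.phi_mul_normH_le_of_mem_Icc hβ ht
        calc f (R * c) * c * g t ≤ f (R * v t) * v t * g t :=
              mul_le_mul_of_nonneg_right (hmul hc (hc.trans hv_ge) hv_ge) (hgnonneg t (hsub ht))
          _ = f (R * v t) * g t * v t := by ring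
    _ ≤ ∫ t in (0 : ℝ)..1, f (R * v t) * g t * v t := by
        refine intervalIntegral.integral_mono_interval hβ.1 (by linarith [hβ.2])
          (by linarith [hβ.1]) ((ae_restrict_mem measurableSet_Ioc).mono fun t ht => ?_) hF_int
        have hv_nonneg := hv.nonneg (Ioc_subset_Icc_self ht)
        have hfv : 0 ≤ f (R * v t) * v t := by
          simpa using hmul self_mem_Ici hv_nonneg hv_nonneg
        simpa [mul_right_comm] using mul_nonneg hfv (hgnonneg t (Ioc_subset_Icc_self ht))

end memK

theorem fibering_negative_at_R_general
    (f : ℝ → ℝ) (hf : ContDiff ℝ 1 f)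
    (hfmono : MonotoneOn f (Ici (0:ℝ)))
    (hf0 : 0 ≤ f 0)
    (g : ℝ → ℝ) (hgnonneg : ∀ t ∈ Icc (0:ℝ) 1, 0 ≤ g t)
    (hgbdd : ∃ M : ℝ, ∀ t ∈ Icc (0:ℝ) 1, g t ≤ M)
    (hgmeas : Measurable g)
    (hgsymm : ∀ t ∈ Icc (0:ℝ) (1/2), g t = g (1 - t))
    (R : ℝ) (hR : 0 < R)
    (β : ℝ) (hβ : β ∈ Ioo (0:ℝ) (1/4))
    (Ctil : ℝ) (hCtil : Ctil = ∫ t in β..(1/2:ℝ), g t) (hCpos : 0 < Ctil)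
    (hH1 : f (R * phi β) / R > 1 / (2 * phi β * Ctil)) :
    ∀ v : ℝ → ℝ, memK v → normH v = 1 →
      (∫ t in (0:ℝ)..1, f (R * v t) * g t * v t) > R := by
  intro v hv hnorm
  obtain ⟨M, hM⟩ := hgbdd
  have hβ₀ : β ∈ Icc (0 : ℝ) (1 / 2) := ⟨hβ.1.le, by linarith [hβ.2]⟩
  have hg_int : IntervalIntegrable g volume 0 1 :=
    intervalIntegrable_of_norm_le hgmeas.aestronglyMeasurable (M := M) fun t ht => by
      rw [uIcc_of_le zero_le_one] at ht
      simpa [abs_of_nonneg (hgnonneg t ht)] using hM t ht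
  have hg_sym : ∫ t in β..(1 - β), g t = 2 * Ctil := by
    have hhalf : (1 : ℝ) - β = 2 * (1 / 2) - β := by ring
    rw [hhalf, integral_eq_two_smul_integral_of_symm, hCtil, smul_eq_mul]
    · exact hg_int.mono_set (hhalf ▸ uIcc_self_one_sub_subset ⟨hβ₀.1, by linarith [hβ.2]⟩)
    · intro t ht
      rw [uIcc_of_le hβ₀.2] at ht
      rw [hgsymm t ⟨hβ₀.1.trans ht.1, ht.2⟩]
      norm_num
  have hφβ : 0 < phi β := phi_pos ⟨hβ.1, by linarith [hβ.2]⟩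
  calc R < f (R * phi β) * phi β * (2 * Ctil) := by
        linear_combination (div_lt_div_iff₀ (by positivity) hR).mp hH1
    _ ≤ ∫ t in (0 : ℝ)..1, f (R * v t) * g t * v t := by
        simpa [hnorm, hg_sym] using
          hv.mul_integral_le_integral hf.continuous hfmono hf0 hg_int hgnonneg hR.le hβ₀

/-- Upper estimate at radius `R`: under `f(Rφ(β))/R > 1/(2φ(β)C̃)`,
the fibering derivative is negative at the outer radius. -/
theorem fibering_negative_at_R
    (f : ℝ → ℝ) (hf : ContDiff ℝ 1 f)
    (hfmono : MonotoneOn f (Ici (0:ℝ)))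
    (hf0 : 0 ≤ f 0) (hfpos : ∀ t : ℝ, 0 < t → 0 < f t)
    (g : ℝ → ℝ) (hgnonneg : ∀ t ∈ Icc (0:ℝ) 1, 0 ≤ g t)
    (hgbdd : ∃ M : ℝ, ∀ t ∈ Icc (0:ℝ) 1, g t ≤ M)
    (hgmeas : Measurable g)
    (hgmono : MonotoneOn g (Icc (0:ℝ) (1/2)))
    (hgsymm : ∀ t ∈ Icc (0:ℝ) (1/2), g t = g (1 - t))
    (R : ℝ) (hR : 0 < R)
    (β : ℝ) (hβ : β ∈ Ioo (0:ℝ) (1/4))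
    (Ctil : ℝ) (hCtil : Ctil = ∫ t in β..(1/2:ℝ), g t) (hCpos : 0 < Ctil)
    (hH1 : f (R * phi β) / R > 1 / (2 * phi β * Ctil)) :
    ∀ v : ℝ → ℝ, memK v → normH v = 1 →
      (∫ t in (0:ℝ)..1, f (R * v t) * g t * v t) > R :=
  fibering_negative_at_R_general f hf hfmono hf0 g hgnonneg hgbdd hgmeas hgsymm R hR β hβ Ctil hCtil
    hCpos hH1
end

section
/- Assume (H3): there exist μ > 1 and λ > 0 such that t f'(t) − μ f(t) ≥ 0 and f'(t) ≥ λ for all t ∈ [rφ(β), R], and B̃ f(rφ(β)) < λ C̃ (1 − 1/μ) r φ(β). Then for every v ∈ K with ‖v‖ = 1 and every σ ∈ [r, R], one has ∫₀^{1/2} ( f(σ v(t)) − f'(σ v(t)) σ v(t) ) g(t) v(t) dt < 0; equivalently, the function h(σ) = 1 − ∫₀¹ (f(σ v(t))/σ) g(t) v(t) dt has strictly negative derivative on [r, R]. -/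
open Set MeasureTheory intervalIntegral

lemma deriv_nonneg_of_monotoneOn' {f : ℝ → ℝ} {s : ℝ} (hd : DifferentiableAt ℝ f s)
    (hm : MonotoneOn f (Set.Ici (0:ℝ))) (hs : 0 < s) : 0 ≤ deriv f s := by
  have h1 : Filter.Tendsto (slope f s) (nhdsWithin s (Set.Ioi s)) (nhds (deriv f s)) :=
    (hasDerivAt_iff_tendsto_slope.1 hd.hasDerivAt).mono_left
      (nhdsWithin_mono s fun y hy => ne_of_gt hy)
  refine ge_of_tendsto h1 ?_
  filter_upwards [self_mem_nhdsWithin] with y hy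
  have hsy : s < y := hy
  have hfle : f s ≤ f y := hm hs.le (hs.trans hsy).le hsy.le
  rw [slope_def_field]
  apply div_nonneg <;> linarith

lemma II_of_bdd {w : ℝ → ℝ} {a b C : ℝ} (hab : a ≤ b)
    (hm : AEStronglyMeasurable w (MeasureTheory.volume.restrict (Set.Ioc a b)))
    (hb : ∀ t ∈ Set.Ioc a b, |w t| ≤ C) : IntervalIntegrable w MeasureTheory.volume a b := by
  have hc : IntervalIntegrable (fun _ : ℝ => C) MeasureTheory.volume a b :=
    intervalIntegrable_const
  refine hc.mono_fun ?_ ?_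
  · rwa [uIoc_of_le hab]
  · rw [uIoc_of_le hab]
    refine (MeasureTheory.ae_restrict_iff' measurableSet_Ioc).2 (Filter.Eventually.of_forall ?_)
    intro t ht
    simpa [Real.norm_eq_abs] using (hb t ht).trans (le_abs_self C)


set_option maxHeartbeats 1000000

/-- Under condition (H3), the key integral is negative; equivalently the
function `h(σ) = 1 - ∫₀¹ (f(σv(t))/σ) g(t) v(t) dt` has strictly negative derivative on `[r,R]`. -/
theorem h_strictly_decreasing_of_H3
    (f : ℝ → ℝ) (hf : ContDiff ℝ 1 f)
    (hfmono : MonotoneOn f (Ici (0:ℝ)))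
    (hf0 : 0 ≤ f 0) (hfpos : ∀ t : ℝ, 0 < t → 0 < f t)
    (g : ℝ → ℝ) (hgnonneg : ∀ t ∈ Icc (0:ℝ) 1, 0 ≤ g t)
    (hgbdd : ∃ M : ℝ, ∀ t ∈ Icc (0:ℝ) 1, g t ≤ M)
    (hgmeas : Measurable g)
    (hgmono : MonotoneOn g (Icc (0:ℝ) (1/2)))
    (hgsymm : ∀ t ∈ Icc (0:ℝ) (1/2), g t = g (1 - t))
    (r R : ℝ) (hr : 0 < r) (hrR : r < R)
    (β : ℝ) (hβ : β ∈ Ioo (0:ℝ) (1/4))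
    (Btil Ctil : ℝ)
    (hBtil : Btil = ∫ t in (0:ℝ)..β, g t)
    (hCtil : Ctil = ∫ t in β..(1/2:ℝ), g t) (hCpos : 0 < Ctil)
    -- condition (H3)
    (μ lam : ℝ) (hμ : 1 < μ) (hlam : 0 < lam)
    (hAR : ∀ t ∈ Icc (r * phi β) R, 0 ≤ t * deriv f t - μ * f t)
    (hf'lam : ∀ t ∈ Icc (r * phi β) R, lam ≤ deriv f t)
    (hBC : Btil * f (r * phi β) < lam * Ctil * (1 - 1 / μ) * (r * phi β)) :
    ∀ v : ℝ → ℝ, memK v → normH v = 1 →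
      (∀ σ ∈ Icc r R,
        (∫ t in (0:ℝ)..(1/2:ℝ),
          (f (σ * v t) - deriv f (σ * v t) * (σ * v t)) * g t * v t) < 0) ∧
      ∃ h' : ℝ → ℝ, ∀ σ ∈ Icc r R,
        HasDerivWithinAt (fun σ : ℝ => 1 - ∫ t in (0:ℝ)..1, f (σ * v t) / σ * g t * v t)
          (h' σ) (Icc r R) σ ∧ h' σ < 0 := by
  obtain ⟨M, hgM⟩ := hgbdd
  intro v hv hnorm
  obtain ⟨hdiff, hdc, hv0, hv1, hsymm, hmono, hhar⟩ := hv
  have hβ0 : 0 < β := hβ.1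
  have hβ4 : β < 1/4 := hβ.2
  have hphiβ : 0 < phi β := by unfold phi; nlinarith
  have hφβpos : 0 < r * phi β := mul_pos hr hphiβ
  have hR : 0 < R := hr.trans hrR
  have hM0 : 0 ≤ M := le_trans (hgnonneg 0 (by norm_num)) (hgM 0 (by norm_num))
  have hfc : Continuous f := hf.continuous
  have hf'c : Continuous (deriv f) := hf.continuous_deriv le_rfl
  have hvc : ContinuousOn v (Icc 0 1) := fun t ht => (hdiff t ht).continuousAt.continuousWithinAt
  -- Harnack with norm 1
  have hhar1 : ∀ t ∈ Icc (0:ℝ) (1/2), phi t ≤ v t := by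
    intro t ht; have := hhar t ht; rwa [hnorm, mul_one] at this
  have hvnn : ∀ t ∈ Icc (0:ℝ) (1/2), 0 ≤ v t := by
    intro t ht
    refine le_trans ?_ (hhar1 t ht)
    unfold phi; nlinarith [ht.1, ht.2]
  have hβhalf : β ∈ Icc (0:ℝ) (1/2) := ⟨hβ0.le, by linarith⟩
  have hvβpos : 0 < v β := lt_of_lt_of_le hphiβ (hhar1 β hβhalf)
  -- the integral of (deriv v)^2 is one
  have hint1 : (∫ t in (0:ℝ)..1, deriv v t ^ 2) = 1 := by
    have := hnorm; unfold normH at this; exact Real.sqrt_eq_one.mp this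
  -- v (1/2) ≤ 3/4
  have hsqint : IntervalIntegrable (fun t => deriv v t ^ 2) volume 0 1 := by
    apply ContinuousOn.intervalIntegrable
    rw [uIcc_of_le (by norm_num : (0:ℝ) ≤ 1)]
    exact hdc.pow 2
  have hsqint2 : IntervalIntegrable (fun t => deriv v t ^ 2) volume 0 (1/2) :=
    hsqint.mono_set (by rw [uIcc_of_le (by norm_num : (0:ℝ) ≤ 1), uIcc_of_le (by norm_num : (0:ℝ) ≤ 1/2)]; exact Icc_subset_Icc le_rfl (by norm_num))
  have hdint2 : IntervalIntegrable (deriv v) volume 0 (1/2) := by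
    apply ContinuousOn.intervalIntegrable
    rw [uIcc_of_le (by norm_num : (0:ℝ) ≤ 1/2)]
    exact hdc.mono (Icc_subset_Icc le_rfl (by norm_num))
  have hv12 : v (1/2 : ℝ) ≤ 3/4 := by
    have hftc : (∫ t in (0:ℝ)..(1/2:ℝ), deriv v t) = v (1/2) - v 0 := by
      apply intervalIntegral.integral_deriv_eq_sub
      · intro x hx
        rw [uIcc_of_le (by norm_num : (0:ℝ) ≤ 1/2)] at hx
        exact hdiff x ⟨hx.1, by linarith [hx.2]⟩
      · exact hdint2
    have hmono2 : (∫ t in (0:ℝ)..(1/2:ℝ), deriv v t)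
        ≤ ∫ t in (0:ℝ)..(1/2:ℝ), (2⁻¹ * deriv v t ^ 2 + 2⁻¹) := by
      apply intervalIntegral.integral_mono_on (by norm_num) hdint2
      · exact (hsqint2.const_mul _).add intervalIntegrable_const
      · intro x _; nlinarith [sq_nonneg (deriv v x - 1)]
    have hcomp : (∫ t in (0:ℝ)..(1/2:ℝ), (2⁻¹ * deriv v t ^ 2 + 2⁻¹))
        = 2⁻¹ * (∫ t in (0:ℝ)..(1/2:ℝ), deriv v t ^ 2) + 4⁻¹ := by
      rw [intervalIntegral.integral_add (hsqint2.const_mul _) intervalIntegrable_const,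
        intervalIntegral.integral_const_mul, intervalIntegral.integral_const]
      norm_num
    have hle1 : (∫ t in (0:ℝ)..(1/2:ℝ), deriv v t ^ 2) ≤ 1 := by
      have hmi : (∫ t in (0:ℝ)..(1/2:ℝ), deriv v t ^ 2) ≤ ∫ t in (0:ℝ)..(1:ℝ), deriv v t ^ 2 :=
        intervalIntegral.integral_mono_interval (le_refl (0:ℝ)) (by norm_num) (by norm_num)
        (Filter.Eventually.of_forall (fun x => sq_nonneg _)) hsqint
      linarith [hint1]
    rw [hv0, sub_zero] at hftc
    rw [hftc, hcomp] at hmono2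
    linarith
  have hv34 : ∀ t ∈ Icc (0:ℝ) (1/2), v t ≤ 3/4 := fun t ht =>
    le_trans (hmono ht ⟨by norm_num, le_rfl⟩ ht.2) hv12
  have hvbnd : ∀ t ∈ Icc (0:ℝ) 1, 0 ≤ v t ∧ v t ≤ 3/4 := by
    intro t ht
    rcases le_or_gt t (1/2) with h|h
    · exact ⟨hvnn t ⟨ht.1, h⟩, hv34 t ⟨ht.1, h⟩⟩
    · have hs := hsymm t ht
      have h1t : (1 - t) ∈ Icc (0:ℝ) (1/2) := ⟨by linarith [ht.2], by linarith⟩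
      rw [hs]
      exact ⟨hvnn _ h1t, hv34 _ h1t⟩
  obtain ⟨C1, hC1⟩ := (isCompact_Icc (a := (0:ℝ)) (b := 2*R)).exists_bound_of_continuousOn
    hfc.continuousOn
  obtain ⟨C2, hC2⟩ := (isCompact_Icc (a := (0:ℝ)) (b := 2*R)).exists_bound_of_continuousOn
    hf'c.continuousOn
  have hC1nn : 0 ≤ C1 := le_trans (norm_nonneg _) (hC1 0 ⟨le_rfl, by positivity⟩)
  have hC2nn : 0 ≤ C2 := le_trans (norm_nonneg _) (hC2 0 ⟨le_rfl, by positivity⟩)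
  have hμ0 : 0 < μ := by linarith
  have hν : 0 < 1 - 1/μ := by
    have h : 1/μ < 1 := by rw [div_lt_one hμ0]; exact hμ
    linarith
  -- pointwise estimate on [0, β]
  have hest1 : ∀ σ ∈ Icc r R, ∀ t ∈ Icc (0:ℝ) β,
      f (σ * v t) - deriv f (σ * v t) * (σ * v t) ≤ f (r * phi β) := by
    intro σ hσ t ht
    have hσ0 : 0 < σ := lt_of_lt_of_le hr hσ.1
    have htmem : t ∈ Icc (0:ℝ) (1/2) := ⟨ht.1, le_trans ht.2 (by linarith)⟩
    have hvt0 : 0 ≤ v t := hvnn t htmem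
    have hs0 : 0 ≤ σ * v t := mul_nonneg hσ0.le hvt0
    have hsR : σ * v t ≤ R := by
      calc σ * v t ≤ σ * 1 := mul_le_mul_of_nonneg_left (by linarith [hv34 t htmem]) hσ0.le
        _ = σ := mul_one σ
        _ ≤ R := hσ.2
    rcases le_or_gt (σ * v t) (r * phi β) with hc|hc
    · have h1 : f (σ * v t) ≤ f (r * phi β) := hfmono hs0 hφβpos.le hc
      have h2 : 0 ≤ deriv f (σ * v t) * (σ * v t) := by
        rcases eq_or_lt_of_le hs0 with he|hlt
        · rw [← he, mul_zero]
        · exact mul_nonneg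
            (deriv_nonneg_of_monotoneOn' ((hf.differentiable one_ne_zero) _) hfmono hlt) hs0
      linarith
    · have hmem : σ * v t ∈ Icc (r * phi β) R := ⟨hc.le, hsR⟩
      have h3 := hAR _ hmem
      have hfs : 0 ≤ f (σ * v t) := le_trans hf0 (hfmono (mem_Ici.2 le_rfl) hs0 hs0)
      nlinarith [hfpos _ hφβpos, mul_comm (σ * v t) (deriv f (σ * v t)), hfs, h3]
  -- pointwise estimate on [β, 1/2]
  have hest2 : ∀ σ ∈ Icc r R, ∀ t ∈ Icc β (1/2:ℝ),
      f (σ * v t) - deriv f (σ * v t) * (σ * v t)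
        ≤ -((1 - 1/μ) * lam * (r * phi β)) := by
    intro σ hσ t ht
    have hσ0 : 0 < σ := lt_of_lt_of_le hr hσ.1
    have htmem : t ∈ Icc (0:ℝ) (1/2) := ⟨le_trans hβ0.le ht.1, ht.2⟩
    have hvt : v β ≤ v t := hmono hβhalf htmem ht.1
    have hvφ : phi β ≤ v t := le_trans (hhar1 β hβhalf) hvt
    have hs1 : r * phi β ≤ σ * v t :=
      le_trans (mul_le_mul_of_nonneg_right hσ.1 hphiβ.le)
        (mul_le_mul_of_nonneg_left hvφ hσ0.le)
    have hsR : σ * v t ≤ R := by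
      calc σ * v t ≤ σ * 1 := mul_le_mul_of_nonneg_left (by linarith [hv34 t htmem]) hσ0.le
        _ = σ := mul_one σ
        _ ≤ R := hσ.2
    have hmem : σ * v t ∈ Icc (r * phi β) R := ⟨hs1, hsR⟩
    have h3 := hAR _ hmem
    have h4 := hf'lam _ hmem
    have hX : lam * (r * phi β) ≤ deriv f (σ * v t) * (σ * v t) :=
      mul_le_mul h4 hs1 hφβpos.le (le_trans hlam.le h4)
    have hμν : μ * (1 - 1/μ) = μ - 1 := by field_simp
    nlinarith [h3, hX, hμν, mul_comm (σ * v t) (deriv f (σ * v t)),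
      mul_pos hlam hφβpos,
      mul_nonneg (by linarith : (0:ℝ) ≤ μ - 1)
        (by linarith : (0:ℝ) ≤ deriv f (σ * v t) * (σ * v t) - lam * (r * phi β))]
  -- measurability of the integrand
  have hwm : ∀ σ : ℝ, AEStronglyMeasurable
      (fun t => (f (σ * v t) - deriv f (σ * v t) * (σ * v t)) * g t * v t)
      (volume.restrict (Ioc (0:ℝ) 1)) := by
    intro σ
    have hm : ContinuousOn (fun t => σ * v t) (Icc (0:ℝ) 1) := continuousOn_const.mul hvc
    have hA : ContinuousOn (fun t => f (σ * v t) - deriv f (σ * v t) * (σ * v t)) (Icc (0:ℝ) 1) :=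
      (hfc.comp_continuousOn hm).sub ((hf'c.comp_continuousOn hm).mul hm)
    have h1 : AEStronglyMeasurable (fun t => f (σ * v t) - deriv f (σ * v t) * (σ * v t))
        (volume.restrict (Ioc (0:ℝ) 1)) :=
      (hA.mono Ioc_subset_Icc_self).aestronglyMeasurable measurableSet_Ioc
    have h2 : AEStronglyMeasurable v (volume.restrict (Ioc (0:ℝ) 1)) :=
      (hvc.mono Ioc_subset_Icc_self).aestronglyMeasurable measurableSet_Ioc
    exact (h1.mul (hgmeas.aestronglyMeasurable.restrict)).mul h2
  -- uniform bound of the integrand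
  have hwbd : ∀ σ ∈ Icc r R, ∀ t ∈ Icc (0:ℝ) 1,
      |(f (σ * v t) - deriv f (σ * v t) * (σ * v t)) * g t * v t|
        ≤ (C1 + C2 * (2*R)) * M := by
    intro σ hσ t ht
    have hσ0 : 0 < σ := lt_of_lt_of_le hr hσ.1
    obtain ⟨hv0', hv34'⟩ := hvbnd t ht
    have hsmem : σ * v t ∈ Icc (0:ℝ) (2*R) := by
      refine ⟨mul_nonneg hσ0.le hv0', ?_⟩
      calc σ * v t ≤ σ * 1 := mul_le_mul_of_nonneg_left (by linarith) hσ0.le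
        _ = σ := mul_one σ
        _ ≤ 2*R := by linarith [hσ.2]
    have h1 : |f (σ * v t)| ≤ C1 := by have := hC1 _ hsmem; rwa [Real.norm_eq_abs] at this
    have h2 : |deriv f (σ * v t)| ≤ C2 := by have := hC2 _ hsmem; rwa [Real.norm_eq_abs] at this
    have h3 : |σ * v t| ≤ 2*R := by rw [abs_of_nonneg hsmem.1]; exact hsmem.2
    have h4 : |g t| ≤ M := by rw [abs_of_nonneg (hgnonneg t ht)]; exact hgM t ht
    have h5 : |v t| ≤ 1 := by rw [abs_of_nonneg hv0']; linarith
    have h6 : |f (σ * v t) - deriv f (σ * v t) * (σ * v t)| ≤ C1 + C2 * (2*R) := by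
      refine le_trans (abs_sub _ _) ?_
      have h7 : |deriv f (σ * v t) * (σ * v t)| ≤ C2 * (2*R) := by
        rw [abs_mul]; exact mul_le_mul h2 h3 (abs_nonneg _) hC2nn
      linarith
    calc |(f (σ * v t) - deriv f (σ * v t) * (σ * v t)) * g t * v t|
        = |(f (σ * v t) - deriv f (σ * v t) * (σ * v t)) * g t| * |v t| := abs_mul _ _
      _ ≤ ((C1 + C2 * (2*R)) * M) * 1 := by
          refine mul_le_mul ?_ h5 (abs_nonneg _) (by positivity)
          rw [abs_mul]
          exact mul_le_mul h6 h4 (abs_nonneg _) (by positivity)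
      _ = (C1 + C2 * (2*R)) * M := mul_one _
  -- interval integrability of the integrand
  have hwint : ∀ σ ∈ Icc r R, ∀ a b : ℝ, 0 ≤ a → a ≤ b → b ≤ 1 →
      IntervalIntegrable
        (fun t => (f (σ * v t) - deriv f (σ * v t) * (σ * v t)) * g t * v t) volume a b := by
    intro σ hσ a b ha hab hb1
    refine II_of_bdd (C := (C1 + C2 * (2*R)) * M) hab
      ((hwm σ).mono_measure (Measure.restrict_mono (Ioc_subset_Ioc ha hb1) le_rfl)) ?_
    intro t ht
    exact hwbd σ hσ t ⟨le_trans ha ht.1.le, le_trans ht.2 hb1⟩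
  have hgint : ∀ a b : ℝ, 0 ≤ a → a ≤ b → b ≤ 1 → IntervalIntegrable g volume a b := by
    intro a b ha hab hb1
    refine II_of_bdd (C := M) hab (hgmeas.aestronglyMeasurable.restrict) ?_
    intro t ht
    have htm : t ∈ Icc (0:ℝ) 1 := ⟨le_trans ha ht.1.le, le_trans ht.2 hb1⟩
    rw [abs_of_nonneg (hgnonneg t htm)]
    exact hgM t htm
  -- Part 1 : the key negativity
  have key : ∀ σ ∈ Icc r R, (∫ t in (0:ℝ)..(1/2:ℝ),
      (f (σ * v t) - deriv f (σ * v t) * (σ * v t)) * g t * v t) < 0 := by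
    intro σ hσ
    have hw1 := hwint σ hσ 0 β le_rfl hβ0.le (by linarith)
    have hw2 := hwint σ hσ β (1/2) hβ0.le (by linarith) (by norm_num)
    have hfφ : 0 < f (r * phi β) := hfpos _ hφβpos
    have hD : 0 < (1 - 1/μ) * lam * (r * phi β) := by positivity
    have hI1 : (∫ t in (0:ℝ)..β,
        (f (σ * v t) - deriv f (σ * v t) * (σ * v t)) * g t * v t)
        ≤ f (r * phi β) * v β * Btil := by
      have hmono1 : (∫ t in (0:ℝ)..β,
          (f (σ * v t) - deriv f (σ * v t) * (σ * v t)) * g t * v t)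
          ≤ ∫ t in (0:ℝ)..β, (f (r * phi β) * v β) * g t := by
        refine intervalIntegral.integral_mono_on hβ0.le hw1
          ((hgint 0 β le_rfl hβ0.le (by linarith)).const_mul _) ?_
        intro t ht
        have htm : t ∈ Icc (0:ℝ) (1/2) := ⟨ht.1, le_trans ht.2 (by linarith)⟩
        have hA := hest1 σ hσ t ht
        have hg0 := hgnonneg t ⟨ht.1, by linarith [ht.2]⟩
        have hv0' := hvnn t htm
        have hvβ' : v t ≤ v β := hmono htm hβhalf ht.2
        nlinarith [mul_nonneg (mul_nonneg (sub_nonneg.2 hA) hg0) hv0',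
          mul_nonneg (mul_nonneg hfφ.le hg0) (sub_nonneg.2 hvβ')]
      rw [intervalIntegral.integral_const_mul] at hmono1
      rw [hBtil]
      linarith [hmono1]
    have hI2 : (∫ t in β..(1/2:ℝ),
        (f (σ * v t) - deriv f (σ * v t) * (σ * v t)) * g t * v t)
        ≤ (-((1 - 1/μ) * lam * (r * phi β)) * v β) * Ctil := by
      have hmono2' : (∫ t in β..(1/2:ℝ),
          (f (σ * v t) - deriv f (σ * v t) * (σ * v t)) * g t * v t)
          ≤ ∫ t in β..(1/2:ℝ), (-((1 - 1/μ) * lam * (r * phi β)) * v β) * g t := by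
        refine intervalIntegral.integral_mono_on (by linarith) hw2
          ((hgint β (1/2) hβ0.le (by linarith) (by norm_num)).const_mul _) ?_
        intro t ht
        have htm : t ∈ Icc (0:ℝ) (1/2) := ⟨le_trans hβ0.le ht.1, ht.2⟩
        have hA := hest2 σ hσ t ht
        have hg0 := hgnonneg t ⟨htm.1, by linarith [ht.2]⟩
        have hv0' := hvnn t htm
        have hvβ' : v β ≤ v t := hmono hβhalf htm ht.1
        nlinarith [mul_nonneg (mul_nonneg (sub_nonneg.2 hA) hg0) hv0',
          mul_nonneg (mul_nonneg hD.le hg0) (sub_nonneg.2 hvβ')]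
      rw [intervalIntegral.integral_const_mul] at hmono2'
      rw [hCtil]
      linarith [hmono2']
    have hsplit := intervalIntegral.integral_add_adjacent_intervals hw1 hw2
    rw [← hsplit]
    nlinarith [mul_lt_mul_of_pos_left hBC hvβpos]
  refine ⟨key, ?_⟩
  refine ⟨fun σ => -(∫ t in (0:ℝ)..1,
      (deriv f (σ * v t) * v t * σ - f (σ * v t) * 1) / σ ^ 2 * g t * v t), ?_⟩
  intro σ hσ
  have hσ0 : 0 < σ := lt_of_lt_of_le hr hσ.1
  have hε : 0 < r/2 := by linarith
  have hball : ∀ x ∈ Metric.ball σ (r/2), r/2 < x ∧ x ≤ 2*R := by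
    intro x hx
    rw [Metric.mem_ball, Real.dist_eq] at hx
    have h1 := abs_lt.1 hx
    constructor
    · linarith [hσ.1, h1.1]
    · linarith [hσ.2, h1.2, hrR]
  -- measurability of F x for every x
  have hFm : ∀ x : ℝ, AEStronglyMeasurable (fun t => f (x * v t) / x * g t * v t)
      (volume.restrict (Set.uIoc (0:ℝ) 1)) := by
    intro x
    rw [uIoc_of_le (by norm_num : (0:ℝ) ≤ 1)]
    have hm : ContinuousOn (fun t => x * v t) (Icc (0:ℝ) 1) := continuousOn_const.mul hvc
    have hA : ContinuousOn (fun t => f (x * v t) / x) (Icc (0:ℝ) 1) :=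
      (hfc.comp_continuousOn hm).div_const x
    have h1 : AEStronglyMeasurable (fun t => f (x * v t) / x)
        (volume.restrict (Ioc (0:ℝ) 1)) :=
      (hA.mono Ioc_subset_Icc_self).aestronglyMeasurable measurableSet_Ioc
    have h2 : AEStronglyMeasurable v (volume.restrict (Ioc (0:ℝ) 1)) :=
      (hvc.mono Ioc_subset_Icc_self).aestronglyMeasurable measurableSet_Ioc
    exact (h1.mul hgmeas.aestronglyMeasurable.restrict).mul h2
  -- integrability of F σ
  have hFint : IntervalIntegrable (fun t => f (σ * v t) / σ * g t * v t) volume 0 1 := by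
    refine II_of_bdd (by norm_num) ?_ (C := C1 / σ * M) ?_
    · have := hFm σ; rwa [uIoc_of_le (by norm_num : (0:ℝ) ≤ 1)] at this
    · intro t ht
      have htm : t ∈ Icc (0:ℝ) 1 := ⟨ht.1.le, ht.2⟩
      obtain ⟨hv0', hv34'⟩ := hvbnd t htm
      have hsmem : σ * v t ∈ Icc (0:ℝ) (2*R) := by
        refine ⟨mul_nonneg hσ0.le hv0', ?_⟩
        calc σ * v t ≤ σ * 1 := mul_le_mul_of_nonneg_left (by linarith) hσ0.le
          _ = σ := mul_one σ
          _ ≤ 2*R := by linarith [hσ.2]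
      have h1 : |f (σ * v t)| ≤ C1 := by have := hC1 _ hsmem; rwa [Real.norm_eq_abs] at this
      have h4 : |g t| ≤ M := by rw [abs_of_nonneg (hgnonneg t htm)]; exact hgM t htm
      have h5 : |v t| ≤ 1 := by rw [abs_of_nonneg hv0']; linarith
      calc |f (σ * v t) / σ * g t * v t| = |f (σ * v t)| / σ * |g t| * |v t| := by
            rw [abs_mul, abs_mul, abs_div, abs_of_nonneg hσ0.le]
        _ ≤ C1 / σ * M * 1 := by
            refine mul_le_mul (mul_le_mul ?_ h4 (abs_nonneg _) (by positivity)) h5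
              (abs_nonneg _) (by positivity)
            gcongr
        _ = C1 / σ * M := mul_one _
  -- F' measurability at σ
  have hF'm : AEStronglyMeasurable
      (fun t => (deriv f (σ * v t) * v t * σ - f (σ * v t) * 1) / σ ^ 2 * g t * v t)
      (volume.restrict (Set.uIoc (0:ℝ) 1)) := by
    rw [uIoc_of_le (by norm_num : (0:ℝ) ≤ 1)]
    have hm : ContinuousOn (fun t => σ * v t) (Icc (0:ℝ) 1) := continuousOn_const.mul hvc
    have hA : ContinuousOn
        (fun t => (deriv f (σ * v t) * v t * σ - f (σ * v t) * 1) / σ ^ 2) (Icc (0:ℝ) 1) :=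
      ((((hf'c.comp_continuousOn hm).mul hvc).mul continuousOn_const).sub
        ((hfc.comp_continuousOn hm).mul continuousOn_const)).div_const _
    have h1 : AEStronglyMeasurable
        (fun t => (deriv f (σ * v t) * v t * σ - f (σ * v t) * 1) / σ ^ 2)
        (volume.restrict (Ioc (0:ℝ) 1)) :=
      (hA.mono Ioc_subset_Icc_self).aestronglyMeasurable measurableSet_Ioc
    have h2 : AEStronglyMeasurable v (volume.restrict (Ioc (0:ℝ) 1)) :=
      (hvc.mono Ioc_subset_Icc_self).aestronglyMeasurable measurableSet_Ioc
    exact (h1.mul hgmeas.aestronglyMeasurable.restrict).mul h2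
  -- the bound
  have hbdd : ∀ t ∈ Set.uIoc (0:ℝ) 1, ∀ x ∈ Metric.ball σ (r/2),
      ‖(deriv f (x * v t) * v t * x - f (x * v t) * 1) / x ^ 2 * g t * v t‖
        ≤ (C2 * (2*R) + C1) / (r/2)^2 * M := by
    intro t ht x hx
    rw [uIoc_of_le (by norm_num : (0:ℝ) ≤ 1)] at ht
    have htm : t ∈ Icc (0:ℝ) 1 := ⟨ht.1.le, ht.2⟩
    obtain ⟨hv0', hv34'⟩ := hvbnd t htm
    obtain ⟨hx1, hx2⟩ := hball x hx
    have hx0 : 0 < x := lt_trans hε hx1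
    have hxv : x * v t ∈ Icc (0:ℝ) (2*R) := by
      refine ⟨mul_nonneg hx0.le hv0', ?_⟩
      calc x * v t ≤ x * 1 := mul_le_mul_of_nonneg_left (by linarith) hx0.le
        _ = x := mul_one x
        _ ≤ 2*R := hx2
    have h1 : |f (x * v t)| ≤ C1 := by have := hC1 _ hxv; rwa [Real.norm_eq_abs] at this
    have h2 : |deriv f (x * v t)| ≤ C2 := by have := hC2 _ hxv; rwa [Real.norm_eq_abs] at this
    have h4 : |g t| ≤ M := by rw [abs_of_nonneg (hgnonneg t htm)]; exact hgM t htm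
    have h5 : |v t| ≤ 1 := by rw [abs_of_nonneg hv0']; linarith
    have hxabs : |x| ≤ 2*R := by rw [abs_of_nonneg hx0.le]; exact hx2
    have hnum : |deriv f (x * v t) * v t * x - f (x * v t) * 1| ≤ C2 * (2*R) + C1 := by
      refine le_trans (abs_sub _ _) ?_
      have ha : |deriv f (x * v t) * v t * x| ≤ C2 * (2*R) := by
        rw [abs_mul, abs_mul]
        calc |deriv f (x * v t)| * |v t| * |x| ≤ C2 * 1 * (2*R) :=
              mul_le_mul (mul_le_mul h2 h5 (abs_nonneg _) hC2nn) hxabs (abs_nonneg _)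
                (by positivity)
          _ = C2 * (2*R) := by ring
      have hb : |f (x * v t) * 1| ≤ C1 := by rw [mul_one]; exact h1
      linarith
    have hx2le : (r/2)^2 ≤ x^2 := by nlinarith
    have hdivle : |(deriv f (x * v t) * v t * x - f (x * v t) * 1) / x ^ 2|
        ≤ (C2 * (2*R) + C1) / (r/2)^2 := by
      rw [abs_div, abs_of_nonneg (by positivity : (0:ℝ) ≤ x^2)]
      exact div_le_div₀ (by positivity) hnum (by positivity) hx2le
    rw [Real.norm_eq_abs, abs_mul, abs_mul]
    calc |(deriv f (x * v t) * v t * x - f (x * v t) * 1) / x ^ 2| * |g t| * |v t|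
        ≤ (C2 * (2*R) + C1) / (r/2)^2 * M * 1 :=
          mul_le_mul (mul_le_mul hdivle h4 (abs_nonneg _) (by positivity)) h5
            (abs_nonneg _) (by positivity)
      _ = (C2 * (2*R) + C1) / (r/2)^2 * M := mul_one _
  -- differentiability in the parameter
  have hdiffx : ∀ t ∈ Set.uIoc (0:ℝ) 1, ∀ x ∈ Metric.ball σ (r/2),
      HasDerivAt (fun x : ℝ => f (x * v t) / x * g t * v t)
        ((deriv f (x * v t) * v t * x - f (x * v t) * 1) / x ^ 2 * g t * v t) x := by
    intro t _ x hx
    have hx0 : 0 < x := lt_trans hε (hball x hx).1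
    have h1 : HasDerivAt (fun y : ℝ => y * v t) (v t) x := hasDerivAt_mul_const (v t)
    have h2 : HasDerivAt f (deriv f (x * v t)) (x * v t) :=
      ((hf.differentiable one_ne_zero) (x * v t)).hasDerivAt
    have h3 : HasDerivAt (fun y : ℝ => f (y * v t)) (deriv f (x * v t) * v t) x := h2.comp x h1
    have h4 := h3.div (hasDerivAt_id' (𝕜 := ℝ) (x := x)) (ne_of_gt hx0)
    exact (h4.mul_const (g t)).mul_const (v t)
  -- differentiate under the integral sign
  have hder := intervalIntegral.hasDerivAt_integral_of_dominated_loc_of_deriv_le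
    (F := fun x t => f (x * v t) / x * g t * v t)
    (F' := fun x t => (deriv f (x * v t) * v t * x - f (x * v t) * 1) / x ^ 2 * g t * v t)
    (μ := volume) (a := 0) (b := 1)
    (bound := fun _ => (C2 * (2*R) + C1) / (r/2)^2 * M) (Metric.ball_mem_nhds σ hε)
    (Filter.Eventually.of_forall hFm) hFint hF'm
    (Filter.Eventually.of_forall hbdd) intervalIntegrable_const
    (Filter.Eventually.of_forall hdiffx)
  have hD2 : HasDerivAt (fun x : ℝ => 1 - ∫ t in (0:ℝ)..1, f (x * v t) / x * g t * v t)
      (-(∫ t in (0:ℝ)..1,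
        (deriv f (σ * v t) * v t * σ - f (σ * v t) * 1) / σ ^ 2 * g t * v t)) σ :=
    hder.2.const_sub 1
  refine ⟨hD2.hasDerivWithinAt, ?_⟩
  -- negativity of the derivative
  have hw1' := hwint σ hσ 0 (1/2) le_rfl (by norm_num) (by norm_num)
  have hw2' := hwint σ hσ (1/2) 1 (by norm_num) (by norm_num) le_rfl
  have hintF' : (∫ t in (0:ℝ)..1,
      (deriv f (σ * v t) * v t * σ - f (σ * v t) * 1) / σ ^ 2 * g t * v t)
      = -(σ^2)⁻¹ * ∫ t in (0:ℝ)..1,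
          (f (σ * v t) - deriv f (σ * v t) * (σ * v t)) * g t * v t := by
    rw [← intervalIntegral.integral_const_mul]
    refine intervalIntegral.integral_congr ?_
    intro t _
    have hσne : σ ≠ 0 := ne_of_gt hσ0
    field_simp
    ring
  have hsym : (∫ t in (1/2:ℝ)..1, (f (σ * v t) - deriv f (σ * v t) * (σ * v t)) * g t * v t)
      = ∫ t in (0:ℝ)..(1/2:ℝ), (f (σ * v t) - deriv f (σ * v t) * (σ * v t)) * g t * v t := by
    have hc := intervalIntegral.integral_comp_sub_left (a := 0) (b := 1/2)
      (fun t => (f (σ * v t) - deriv f (σ * v t) * (σ * v t)) * g t * v t) 1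
    rw [show (1:ℝ) - 1/2 = 1/2 by norm_num, show (1:ℝ) - 0 = 1 by norm_num] at hc
    rw [← hc]
    refine (intervalIntegral.integral_congr ?_).symm
    intro t ht
    rw [uIcc_of_le (by norm_num : (0:ℝ) ≤ 1/2)] at ht
    have ht1 : t ∈ Icc (0:ℝ) 1 := ⟨ht.1, by linarith [ht.2]⟩
    have e1 : v (1 - t) = v t := (hsymm t ht1).symm
    have e2 : g (1 - t) = g t := (hgsymm t ht).symm
    simp only [e1, e2]
  have hsplit2 := intervalIntegral.integral_add_adjacent_intervals hw1' hw2'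
  have hneg := key σ hσ
  have hI : (∫ t in (0:ℝ)..1,
      (f (σ * v t) - deriv f (σ * v t) * (σ * v t)) * g t * v t) < 0 := by
    rw [← hsplit2, hsym]; linarith
  show -(∫ t in (0:ℝ)..1,
    (deriv f (σ * v t) * v t * σ - f (σ * v t) * 1) / σ ^ 2 * g t * v t) < 0
  rw [hintF']
  have hpos : 0 < (σ^2)⁻¹ := by positivity
  have := mul_neg_of_pos_of_neg hpos hI
  linarith
end

section
/- Assume (H4): g(t) = 0 for all t ∈ [0,β]; f is twice continuously differentiable on [rφ(β), R] with f''(t) ≥ M for some constant M > 0 and all t ∈ [rφ(β), R]; and C̃ = ∫_β^{1/2} g(t) dt > 0. Then for every v ∈ K with ‖v‖ = 1, the function h̃(σ) = σ − ∫₀¹ f(σ v(t)) g(t) v(t) dt is strictly concave on [r, R]; in fact h̃''(σ) ≤ −2 C̃ φ(β)³ M < 0 for all σ ∈ [r, R]. -/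
open Set

open MeasureTheory intervalIntegral Interval

set_option maxHeartbeats 1000000

/-- Under condition (H4), the function
`h̃(σ) = σ - ∫₀¹ f(σv(t)) g(t) v(t) dt` is strictly concave on `[r,R]`, with
`h̃''(σ) ≤ -2C̃φ(β)³M < 0`. -/
theorem htilde_strictly_concave_of_H4
    (f : ℝ → ℝ) (hf : ContDiff ℝ 1 f)
    (hfmono : MonotoneOn f (Ici (0:ℝ)))
    (hf0 : 0 ≤ f 0) (hfpos : ∀ t : ℝ, 0 < t → 0 < f t)
    (g : ℝ → ℝ) (hgnonneg : ∀ t ∈ Icc (0:ℝ) 1, 0 ≤ g t)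
    (hgbdd : ∃ M : ℝ, ∀ t ∈ Icc (0:ℝ) 1, g t ≤ M)
    (hgmeas : Measurable g)
    (hgmono : MonotoneOn g (Icc (0:ℝ) (1/2)))
    (hgsymm : ∀ t ∈ Icc (0:ℝ) (1/2), g t = g (1 - t))
    (r R : ℝ) (hr : 0 < r) (hrR : r < R)
    (β : ℝ) (hβ : β ∈ Ioo (0:ℝ) (1/4))
    (Ctil : ℝ) (hCtil : Ctil = ∫ t in β..(1/2:ℝ), g t) (hCpos : 0 < Ctil)
    -- condition (H4): g vanishes on [0,β] and f is C² with f'' ≥ M > 0 on [rφ(β), R]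
    (hg0 : ∀ t ∈ Icc (0:ℝ) β, g t = 0)
    (f'' : ℝ → ℝ) (hf''cont : ContinuousOn f'' (Icc (r * phi β) R))
    (hf'' : ∀ t ∈ Icc (r * phi β) R, HasDerivWithinAt (deriv f) (f'' t) (Icc (r * phi β) R) t)
    (M : ℝ) (hM : 0 < M) (hf''M : ∀ t ∈ Icc (r * phi β) R, M ≤ f'' t) :
    ∀ v : ℝ → ℝ, memK v → normH v = 1 →
      StrictConcaveOn ℝ (Icc r R)
        (fun σ : ℝ => σ - ∫ t in (0:ℝ)..1, f (σ * v t) * g t * v t) ∧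
      ∃ h' h'' : ℝ → ℝ, ∀ σ ∈ Icc r R,
        HasDerivWithinAt (fun σ : ℝ => σ - ∫ t in (0:ℝ)..1, f (σ * v t) * g t * v t)
          (h' σ) (Icc r R) σ ∧
        HasDerivWithinAt h' (h'' σ) (Icc r R) σ ∧
        h'' σ ≤ -2 * Ctil * phi β ^ 3 * M ∧ -2 * Ctil * phi β ^ 3 * M < 0 := by
  intro v hv hnv
  obtain ⟨hvdiff, hvdc, hv0, hv1, hvsym, hvmono, hvhar⟩ := hv
  have hβ0 : 0 < β := hβ.1
  have hβ4 : β < 1/4 := hβ.2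
  have hφβ : 0 < phi β := by unfold phi; nlinarith
  have hφβ1 : phi β ≤ 1 := by unfold phi; nlinarith
  have hR0 : 0 < R := hr.trans hrR
  have hrφR : r * phi β ≤ R := by nlinarith
  -- continuity of v on [0,1]
  have hvcont : ContinuousOn v (Icc 0 1) :=
    fun t ht => ((hvdiff t ht).continuousAt).continuousWithinAt
  -- the norm: the Dirichlet integral equals 1
  have hI1 : (∫ t in (0:ℝ)..1, (deriv v t) ^ 2) = 1 := by
    have h := hnv; unfold normH at h; exact Real.sqrt_eq_one.mp h
  -- v is nonnegative on [0,1]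
  have hvnn : ∀ t ∈ Icc (0:ℝ) 1, 0 ≤ v t := by
    have h2 : ∀ t ∈ Icc (0:ℝ) (1/2), 0 ≤ v t := by
      intro t ht
      have h := hvhar t ht
      rw [hnv] at h
      have hφt : 0 ≤ phi t := by unfold phi; obtain ⟨h1, h2⟩ := ht; nlinarith
      nlinarith
    intro t ht
    rcases le_or_gt t (1/2) with h | h
    · exact h2 t ⟨ht.1, h⟩
    · rw [hvsym t ht]
      exact h2 (1-t) ⟨by linarith [ht.2], by linarith⟩
  -- v ≤ 1 on [0,1]
  have hvle1 : ∀ t ∈ Icc (0:ℝ) 1, v t ≤ 1 := by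
    intro t ht
    have hsub : Icc (0:ℝ) t ⊆ Icc 0 1 := Icc_subset_Icc le_rfl ht.2
    have hut : uIcc (0:ℝ) t = Icc 0 t := uIcc_of_le ht.1
    have hdint : IntervalIntegrable (deriv v) volume 0 t := by
      apply ContinuousOn.intervalIntegrable
      rw [hut]; exact hvdc.mono hsub
    have hvdc2 : ContinuousOn (fun s => (deriv v s) ^ 2) (Icc (0:ℝ) 1) := hvdc.pow 2
    have hdint2 : IntervalIntegrable (fun s => (deriv v s)^2) volume 0 t := by
      apply ContinuousOn.intervalIntegrable
      rw [hut]; exact hvdc2.mono hsub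
    have hdint2' : IntervalIntegrable (fun s => (deriv v s)^2) volume t 1 := by
      apply ContinuousOn.intervalIntegrable
      rw [uIcc_of_le ht.2]; exact hvdc2.mono (Icc_subset_Icc ht.1 le_rfl)
    have hftc : ∫ s in (0:ℝ)..t, deriv v s = v t - v 0 := by
      apply intervalIntegral.integral_eq_sub_of_hasDerivAt
      · intro s hs
        rw [hut] at hs
        exact (hvdiff s (hsub hs)).hasDerivAt
      · exact hdint
    have hmono2 : ∫ s in (0:ℝ)..t, deriv v s ≤ ∫ s in (0:ℝ)..t, (1 + (deriv v s)^2)/2 := by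
      apply intervalIntegral.integral_mono_on ht.1 hdint
      · exact (intervalIntegrable_const.add hdint2).div_const 2
      · intro s _; nlinarith [sq_nonneg (deriv v s - 1)]
    have hsplit : (∫ s in (0:ℝ)..t, (1 + (deriv v s)^2)/2)
        = (t + ∫ s in (0:ℝ)..t, (deriv v s)^2)/2 := by
      rw [intervalIntegral.integral_div, intervalIntegral.integral_add intervalIntegrable_const hdint2]
      simp
    have hq1 : (∫ s in (0:ℝ)..t, (deriv v s)^2) ≤ 1 := by
      have hadd := intervalIntegral.integral_add_adjacent_intervals hdint2 hdint2'
      have hnn : 0 ≤ ∫ s in t..1, (deriv v s)^2 :=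
        intervalIntegral.integral_nonneg ht.2 (fun s _ => sq_nonneg _)
      rw [hI1] at hadd
      linarith
    rw [hv0] at hftc
    have := hmono2
    rw [hftc, hsplit] at this
    linarith [ht.2]
  -- lower bound for v on [β, 1-β]
  have hvlb : ∀ t ∈ Icc β (1-β), phi β ≤ v t := by
    have hhalf : ∀ t ∈ Icc β (1/2), phi β ≤ v t := by
      intro t ht
      have h1 : phi β * 1 ≤ v β := by
        rw [← hnv]; exact hvhar β ⟨hβ0.le, by linarith⟩
      have h2 : v β ≤ v t :=
        hvmono ⟨hβ0.le, by linarith⟩ ⟨by linarith [ht.1], ht.2⟩ ht.1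
      linarith
    intro t ht
    rcases le_or_gt t (1/2) with h | h
    · exact hhalf t ⟨ht.1, h⟩
    · rw [hvsym t ⟨by linarith [ht.1], by linarith [ht.2]⟩]
      exact hhalf (1-t) ⟨by linarith [ht.2], by linarith⟩
  have hsIcc : Icc β (1-β) ⊆ Icc (0:ℝ) 1 := Icc_subset_Icc hβ0.le (by linarith)
  -- g vanishes outside [β, 1-β]
  have hgz : ∀ t ∈ Icc (0:ℝ) 1, t ∉ Icc β (1-β) → g t = 0 := by
    intro t ht hts
    rcases lt_or_ge t β with h | h
    · exact hg0 t ⟨ht.1, h.le⟩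
    · have h2 : 1 - β < t := by
        by_contra hc; push_neg at hc; exact hts ⟨h, hc⟩
      have hsym := hgsymm (1-t) ⟨by linarith [ht.2], by linarith⟩
      rw [show (1 - (1-t)) = t by ring] at hsym
      rw [← hsym]
      exact hg0 (1-t) ⟨by linarith [ht.2], by linarith⟩
  obtain ⟨Mg, hMg⟩ := hgbdd
  have hMg0 : 0 ≤ Mg := le_trans (hgnonneg 0 ⟨le_rfl, zero_le_one⟩) (hMg 0 ⟨le_rfl, zero_le_one⟩)
  -- the multiplication map sends things into [rφ(β), R]
  have hmaps : ∀ σ ∈ Icc r R, ∀ t ∈ Icc β (1-β), σ * v t ∈ Icc (r * phi β) R := by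
    intro σ hσ t ht
    have h1 := hvlb t ht
    have h2 := hvle1 t (hsIcc ht)
    constructor
    · exact mul_le_mul hσ.1 h1 hφβ.le (by linarith [hσ.1])
    · nlinarith [hσ.1, hσ.2]
  -- measure theory setup
  have hIoc : Ι (0:ℝ) 1 = Ioc 0 1 := uIoc_of_le zero_le_one
  have hconst_int : ∀ c : ℝ, Integrable (fun _ => c) (volume.restrict (Ioc (0:ℝ) 1)) :=
    fun c => integrableOn_const measure_Ioc_lt_top.ne
  have hvmeas : AEMeasurable v (volume.restrict (Ioc (0:ℝ) 1)) :=
    (hvcont.mono Ioc_subset_Icc_self).aemeasurable measurableSet_Ioc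
  have hdfc : Continuous (deriv f) := hf.continuous_deriv le_rfl
  have hmeasF : ∀ σ : ℝ, AEStronglyMeasurable (fun t => f (σ * v t) * g t * v t)
      (volume.restrict (Ι (0:ℝ) 1)) := by
    intro σ; rw [hIoc]
    exact (((hf.continuous.measurable.comp_aemeasurable (hvmeas.const_mul σ)).mul
      hgmeas.aemeasurable).mul hvmeas).aestronglyMeasurable
  have hmeasF1 : ∀ σ : ℝ, AEStronglyMeasurable (fun t => deriv f (σ * v t) * v t * g t * v t)
      (volume.restrict (Ι (0:ℝ) 1)) := by
    intro σ; rw [hIoc]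
    exact ((((hdfc.measurable.comp_aemeasurable (hvmeas.const_mul σ)).mul hvmeas).mul
      hgmeas.aemeasurable).mul hvmeas).aestronglyMeasurable
  set J : ℝ → ℝ → ℝ :=
    fun σ => Set.indicator (Icc β (1-β)) (fun t => f'' (σ * v t) * v t * v t * g t * v t)
    with hJdef
  have hmeasJ : ∀ σ ∈ Icc r R, AEStronglyMeasurable (J σ) (volume.restrict (Ι (0:ℝ) 1)) := by
    intro σ hσ; rw [hIoc]
    have hvconts : ContinuousOn v (Icc β (1-β)) := hvcont.mono hsIcc
    have hψc : ContinuousOn (fun t => f'' (σ * v t)) (Icc β (1-β)) :=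
      hf''cont.comp (continuousOn_const.mul hvconts) (fun t ht => hmaps σ hσ t ht)
    have hψm : AEMeasurable (fun t => f'' (σ * v t) * v t * v t * g t * v t)
        (volume.restrict (Icc β (1-β))) :=
      ((((hψc.aemeasurable measurableSet_Icc).mul (hvconts.aemeasurable measurableSet_Icc)).mul
        (hvconts.aemeasurable measurableSet_Icc)).mul hgmeas.aemeasurable).mul
        (hvconts.aemeasurable measurableSet_Icc)
    have hψm' : AEMeasurable (fun t => f'' (σ * v t) * v t * v t * g t * v t)
        ((volume.restrict (Ioc (0:ℝ) 1)).restrict (Icc β (1-β))) := by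
      apply hψm.mono_measure
      rw [Measure.restrict_restrict measurableSet_Icc]
      exact Measure.restrict_mono inter_subset_left le_rfl
    exact ((aemeasurable_indicator_iff measurableSet_Icc).2 hψm').aestronglyMeasurable
  -- bound for f'' on the compact interval
  obtain ⟨K₂, hK₂⟩ := (isCompact_Icc (a := r * phi β) (b := R)).exists_bound_of_continuousOn hf''cont
  have hK₂0 : 0 ≤ K₂ := le_trans (norm_nonneg _) (hK₂ R ⟨hrφR, le_rfl⟩)
  have hJbound : ∀ σ ∈ Icc r R, ∀ t ∈ Ioc (0:ℝ) 1, ‖J σ t‖ ≤ K₂ * Mg := by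
    intro σ hσ t ht
    have ht' : t ∈ Icc (0:ℝ) 1 := Ioc_subset_Icc_self ht
    by_cases hts : t ∈ Icc β (1-β)
    · simp only [hJdef, Set.indicator_of_mem hts]
      have hx := hmaps σ hσ t hts
      have h1 : |f'' (σ * v t)| ≤ K₂ := by
        rw [← Real.norm_eq_abs]; exact hK₂ _ hx
      obtain ⟨h1l, h1u⟩ := abs_le.mp h1
      have h2 : 0 ≤ v t := hvnn t ht'
      have h3 : v t ≤ 1 := hvle1 t ht'
      have h4 : 0 ≤ g t := hgnonneg t ht'
      have h5 : g t ≤ Mg := hMg t ht'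
      have hprod : 0 ≤ v t * v t * g t * v t := by
        apply mul_nonneg (mul_nonneg (mul_nonneg h2 h2) h4) h2
      have hv3le : v t * v t * v t ≤ 1 := by nlinarith
      have hprod1 : v t * v t * g t * v t ≤ Mg := by
        nlinarith [mul_le_mul hv3le h5 h4 zero_le_one]
      rw [Real.norm_eq_abs, abs_le]
      constructor
      · linarith [mul_le_mul_of_nonneg_right h1l hprod, mul_le_mul_of_nonneg_left hprod1 hK₂0]
      · linarith [mul_le_mul_of_nonneg_right h1u hprod, mul_le_mul_of_nonneg_left hprod1 hK₂0]
    · simp only [hJdef, Set.indicator_of_notMem hts]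
      simp only [norm_zero]
      positivity
  have hJint : ∀ σ ∈ Icc r R, IntervalIntegrable (J σ) volume 0 1 := by
    intro σ hσ
    rw [intervalIntegrable_iff, hIoc]
    apply Integrable.mono' (hconst_int (K₂ * Mg))
    · rw [← hIoc]; exact hmeasJ σ hσ
    · exact (ae_restrict_iff' measurableSet_Ioc).2 (Filter.Eventually.of_forall
        (fun t ht => hJbound σ hσ t ht))
  have hgint : IntervalIntegrable g volume 0 1 := by
    rw [intervalIntegrable_iff, hIoc]
    apply Integrable.mono' (hconst_int Mg)
    · exact hgmeas.aestronglyMeasurable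
    · exact (ae_restrict_iff' measurableSet_Ioc).2 (Filter.Eventually.of_forall
        (fun t ht => by
          rw [Real.norm_eq_abs, abs_of_nonneg (hgnonneg t (Ioc_subset_Icc_self ht))]
          exact hMg t (Ioc_subset_Icc_self ht)))
  -- first derivative: differentiation under the integral sign (valid at every real σ₀)
  have keyA : ∀ σ₀ : ℝ,
      IntervalIntegrable (fun t => deriv f (σ₀ * v t) * v t * g t * v t) volume 0 1 ∧
      HasDerivAt (fun σ => ∫ t in (0:ℝ)..1, f (σ * v t) * g t * v t)
        (∫ t in (0:ℝ)..1, deriv f (σ₀ * v t) * v t * g t * v t) σ₀ := by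
    intro σ₀
    set c : ℝ := |σ₀| + 1 with hc
    have hc0 : 0 < c := by positivity
    obtain ⟨K₁, hK₁⟩ := (isCompact_Icc (a := -c) (b := c)).exists_bound_of_continuousOn
      hdfc.continuousOn
    obtain ⟨Kf, hKf⟩ := (isCompact_Icc (a := -c) (b := c)).exists_bound_of_continuousOn
      hf.continuous.continuousOn
    have harg : ∀ t ∈ Ioc (0:ℝ) 1, ∀ σ ∈ Metric.ball σ₀ 1, σ * v t ∈ Icc (-c) c := by
      intro t ht σ hσ
      have h2 : 0 ≤ v t := hvnn t (Ioc_subset_Icc_self ht)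
      have h3 : v t ≤ 1 := hvle1 t (Ioc_subset_Icc_self ht)
      have hd : |σ - σ₀| < 1 := by rwa [Metric.mem_ball, Real.dist_eq] at hσ
      have hσabs : |σ| ≤ c := by
        have := abs_sub_abs_le_abs_sub σ σ₀
        rw [hc]; linarith
      have habs : |σ * v t| ≤ c := by
        rw [abs_mul, abs_of_nonneg h2]
        calc |σ| * v t ≤ c * v t := mul_le_mul_of_nonneg_right hσabs h2
          _ ≤ c * 1 := mul_le_mul_of_nonneg_left h3 hc0.le
          _ = c := mul_one c
      exact abs_le.mp habs
    apply intervalIntegral.hasDerivAt_integral_of_dominated_loc_of_deriv_le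
      (bound := fun _ => K₁ * Mg) (F' := fun σ t => deriv f (σ * v t) * v t * g t * v t)
      (Metric.ball_mem_nhds σ₀ one_pos)
    · exact Filter.Eventually.of_forall (fun σ => hmeasF σ)
    · -- integrability of F σ₀
      rw [intervalIntegrable_iff, hIoc]
      apply Integrable.mono' (hconst_int (Kf * Mg))
      · rw [← hIoc]; exact hmeasF σ₀
      · apply (ae_restrict_iff' measurableSet_Ioc).2
        apply Filter.Eventually.of_forall
        intro t ht
        have hx := harg t ht σ₀ (Metric.mem_ball_self one_pos)
        have h1 : |f (σ₀ * v t)| ≤ Kf := by rw [← Real.norm_eq_abs]; exact hKf _ hx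
        obtain ⟨h1l, h1u⟩ := abs_le.mp h1
        have h2 : 0 ≤ v t := hvnn t (Ioc_subset_Icc_self ht)
        have h3 : v t ≤ 1 := hvle1 t (Ioc_subset_Icc_self ht)
        have h4 : 0 ≤ g t := hgnonneg t (Ioc_subset_Icc_self ht)
        have h5 : g t ≤ Mg := hMg t (Ioc_subset_Icc_self ht)
        have hKf0 : 0 ≤ Kf := (abs_nonneg _).trans h1
        have hprod : 0 ≤ g t * v t := mul_nonneg h4 h2
        have hprod1 : g t * v t ≤ Mg := by
          have := mul_le_mul h5 h3 h2 hMg0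
          linarith
        rw [Real.norm_eq_abs, abs_mul, abs_mul, abs_of_nonneg h4, abs_of_nonneg h2]
        calc |f (σ₀ * v t)| * g t * v t = |f (σ₀ * v t)| * (g t * v t) := by ring
          _ ≤ Kf * Mg := mul_le_mul h1 hprod1 hprod hKf0
    · exact hmeasF1 σ₀
    · apply Filter.Eventually.of_forall
      intro t ht σ hσ
      rw [hIoc] at ht
      have hx := harg t ht σ hσ
      have h1 : |deriv f (σ * v t)| ≤ K₁ := by rw [← Real.norm_eq_abs]; exact hK₁ _ hx
      have hK₁0 : 0 ≤ K₁ := (abs_nonneg _).trans h1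
      have h2 : 0 ≤ v t := hvnn t (Ioc_subset_Icc_self ht)
      have h3 : v t ≤ 1 := hvle1 t (Ioc_subset_Icc_self ht)
      have h4 : 0 ≤ g t := hgnonneg t (Ioc_subset_Icc_self ht)
      have h5 : g t ≤ Mg := hMg t (Ioc_subset_Icc_self ht)
      have hprod : 0 ≤ v t * g t * v t := mul_nonneg (mul_nonneg h2 h4) h2
      have hprod1 : v t * g t * v t ≤ Mg := by
        have e1 : v t * g t ≤ 1 * Mg := mul_le_mul h3 h5 h4 zero_le_one
        have e2 : v t * g t * v t ≤ (1 * Mg) * 1 :=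
          mul_le_mul e1 h3 h2 (by linarith)
        linarith
      rw [Real.norm_eq_abs, abs_mul, abs_mul, abs_mul, abs_of_nonneg h2, abs_of_nonneg h4]
      calc |deriv f (σ * v t)| * v t * g t * v t
          = |deriv f (σ * v t)| * (v t * g t * v t) := by ring
        _ ≤ K₁ * Mg := mul_le_mul h1 hprod1 hprod hK₁0
    · exact intervalIntegrable_const
    · apply Filter.Eventually.of_forall
      intro t _ σ _
      have h1 : HasDerivAt f (deriv f (σ * v t)) (σ * v t) :=
        ((hf.differentiable one_ne_zero) (σ * v t)).hasDerivAt
      have h2 := (h1.comp σ (hasDerivAt_mul_const (v t))).mul_const (g t)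
      have h3 := h2.mul_const (v t)
      simpa [Function.comp, mul_assoc] using h3
  -- second derivative at interior points
  have keyB : ∀ σ₀ ∈ Ioo r R,
      HasDerivAt (fun σ => ∫ t in (0:ℝ)..1, deriv f (σ * v t) * v t * g t * v t)
        (∫ t in (0:ℝ)..1, J σ₀ t) σ₀ := by
    intro σ₀ hσ₀
    set ε : ℝ := min (σ₀ - r) (R - σ₀) with hε
    have hε0 : 0 < ε := lt_min (by linarith [hσ₀.1]) (by linarith [hσ₀.2])
    have hball : Metric.ball σ₀ ε ⊆ Ioo r R := by
      intro σ hσ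
      rw [Metric.mem_ball, Real.dist_eq] at hσ
      obtain ⟨ha, hb⟩ := abs_lt.mp hσ
      have h1 : ε ≤ σ₀ - r := min_le_left _ _
      have h2 : ε ≤ R - σ₀ := min_le_right _ _
      exact ⟨by linarith, by linarith⟩
    refine (intervalIntegral.hasDerivAt_integral_of_dominated_loc_of_deriv_le
      (bound := fun _ => K₂ * Mg) (F' := J) (Metric.ball_mem_nhds σ₀ hε0) ?_ ?_ ?_ ?_ ?_ ?_).2
    · exact Filter.Eventually.of_forall (fun σ => hmeasF1 σ)
    · exact (keyA σ₀).1
    · exact hmeasJ σ₀ (Ioo_subset_Icc_self hσ₀)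
    · apply Filter.Eventually.of_forall
      intro t ht σ hσ
      rw [hIoc] at ht
      exact hJbound σ (Ioo_subset_Icc_self (hball hσ)) t ht
    · exact intervalIntegrable_const
    · apply Filter.Eventually.of_forall
      intro t ht σ hσ
      rw [hIoc] at ht
      have ht' : t ∈ Icc (0:ℝ) 1 := Ioc_subset_Icc_self ht
      by_cases hgt : g t = 0
      · have hJ0 : J σ t = 0 := by
          by_cases hts : t ∈ Icc β (1-β) <;>
            simp [hJdef, Set.indicator_of_mem, Set.indicator_of_notMem, hts, hgt]
        have hfun : (fun σ => deriv f (σ * v t) * v t * g t * v t) = fun _ => (0:ℝ) := by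
          funext σ'; rw [hgt]; ring
        rw [hfun, hJ0]
        exact hasDerivAt_const σ 0
      · have hts : t ∈ Icc β (1-β) := by
          by_contra hc; exact hgt (hgz t ht' hc)
        have h1 := hvlb t hts
        have h2 := hvle1 t ht'
        have hσ' : σ ∈ Ioo r R := hball hσ
        have hx : σ * v t ∈ Ioo (r * phi β) R := by
          constructor
          · have e1 : r * phi β < σ * phi β := mul_lt_mul_of_pos_right hσ'.1 hφβ
            have e2 : σ * phi β ≤ σ * v t :=
              mul_le_mul_of_nonneg_left h1 (by linarith [hσ'.1])
            linarith
          · have e1 : σ * v t ≤ σ * 1 := mul_le_mul_of_nonneg_left h2 (by linarith [hσ'.1])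
            linarith [hσ'.2]
        have hdd : HasDerivAt (deriv f) (f'' (σ * v t)) (σ * v t) :=
          (hf'' _ (Ioo_subset_Icc_self hx)).hasDerivAt (Icc_mem_nhds hx.1 hx.2)
        have h3 := ((hdd.comp σ (hasDerivAt_mul_const (v t))).mul_const (v t)).mul_const (g t)
        have h4 := h3.mul_const (v t)
        have hJeq : J σ t = f'' (σ * v t) * v t * v t * g t * v t := by
          simp [hJdef, Set.indicator_of_mem hts]
        rw [hJeq]
        simpa [Function.comp] using h4
  -- continuity of the candidate second derivative integral W on [r,R]
  have hWcont : ContinuousOn (fun σ => ∫ t in (0:ℝ)..1, J σ t) (Icc r R) := by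
    have heq : (fun σ => ∫ t in (0:ℝ)..1, J σ t)
        = fun σ => ∫ t, J σ t ∂(volume.restrict (Ioc (0:ℝ) 1)) := by
      funext σ; rw [intervalIntegral.integral_of_le zero_le_one]
    rw [heq]
    apply continuousOn_of_dominated (bound := fun _ => K₂ * Mg)
    · intro σ hσ; rw [← hIoc]; exact hmeasJ σ hσ
    · intro σ hσ
      exact (ae_restrict_iff' measurableSet_Ioc).2 (Filter.Eventually.of_forall
        (fun t ht => hJbound σ hσ t ht))
    · exact hconst_int _
    · apply (ae_restrict_iff' measurableSet_Ioc).2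
      apply Filter.Eventually.of_forall
      intro t ht
      by_cases hts : t ∈ Icc β (1-β)
      · have heq2 : (fun σ => J σ t) = fun σ => f'' (σ * v t) * v t * v t * g t * v t := by
          funext σ; simp [hJdef, Set.indicator_of_mem hts]
        rw [heq2]
        have hmapsto : MapsTo (fun σ => σ * v t) (Icc r R) (Icc (r * phi β) R) :=
          fun σ hσ => hmaps σ hσ t hts
        exact ((((hf''cont.comp (continuous_id.mul continuous_const).continuousOn
          hmapsto).mul continuousOn_const).mul continuousOn_const).mul
          continuousOn_const).mul continuousOn_const
      · have heq2 : (fun σ => J σ t) = fun _ => (0:ℝ) := by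
          funext σ; simp [hJdef, Set.indicator_of_notMem hts]
        rw [heq2]; exact continuousOn_const
  -- continuity of the first derivative integral G on [r,R]
  obtain ⟨K₃, hK₃⟩ := (isCompact_Icc (a := (0:ℝ)) (b := R)).exists_bound_of_continuousOn
    hdfc.continuousOn
  have hGcont : ContinuousOn (fun σ => ∫ t in (0:ℝ)..1, deriv f (σ * v t) * v t * g t * v t)
      (Icc r R) := by
    have heq : (fun σ => ∫ t in (0:ℝ)..1, deriv f (σ * v t) * v t * g t * v t)
        = fun σ => ∫ t, deriv f (σ * v t) * v t * g t * v t ∂(volume.restrict (Ioc (0:ℝ) 1)) := by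
      funext σ; rw [intervalIntegral.integral_of_le zero_le_one]
    rw [heq]
    apply continuousOn_of_dominated (bound := fun _ => K₃ * Mg)
    · intro σ _; rw [← hIoc]; exact hmeasF1 σ
    · intro σ hσ
      apply (ae_restrict_iff' measurableSet_Ioc).2
      apply Filter.Eventually.of_forall
      intro t ht
      have ht' : t ∈ Icc (0:ℝ) 1 := Ioc_subset_Icc_self ht
      have h2 : 0 ≤ v t := hvnn t ht'
      have h3 : v t ≤ 1 := hvle1 t ht'
      have h4 : 0 ≤ g t := hgnonneg t ht'
      have h5 : g t ≤ Mg := hMg t ht'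
      have hx : σ * v t ∈ Icc (0:ℝ) R := by
        constructor
        · exact mul_nonneg (by linarith [hσ.1]) h2
        · have := mul_le_mul_of_nonneg_left h3 (by linarith [hσ.1] : (0:ℝ) ≤ σ)
          linarith [hσ.2]
      have h1 : |deriv f (σ * v t)| ≤ K₃ := by rw [← Real.norm_eq_abs]; exact hK₃ _ hx
      have hK₃0 : 0 ≤ K₃ := (abs_nonneg _).trans h1
      have hprod : 0 ≤ v t * g t * v t := mul_nonneg (mul_nonneg h2 h4) h2
      have hprod1 : v t * g t * v t ≤ Mg := by
        have e1 : v t * g t ≤ 1 * Mg := mul_le_mul h3 h5 h4 zero_le_one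
        have e2 : v t * g t * v t ≤ (1 * Mg) * 1 := mul_le_mul e1 h3 h2 (by linarith)
        linarith
      rw [Real.norm_eq_abs, abs_mul, abs_mul, abs_mul, abs_of_nonneg h2, abs_of_nonneg h4]
      calc |deriv f (σ * v t)| * v t * g t * v t
          = |deriv f (σ * v t)| * (v t * g t * v t) := by ring
        _ ≤ K₃ * Mg := mul_le_mul h1 hprod1 hprod hK₃0
    · exact hconst_int _
    · apply (ae_restrict_iff' measurableSet_Ioc).2
      apply Filter.Eventually.of_forall
      intro t _
      apply Continuous.continuousOn
      exact (((hdfc.comp (continuous_id.mul continuous_const)).mul continuous_const).mul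
        continuous_const).mul continuous_const
  -- within-derivative of G on all of [r,R] via FTC
  have hWint : ∀ σ' ∈ Icc r R,
      IntervalIntegrable (fun x => ∫ t in (0:ℝ)..1, J x t) volume r σ' := by
    intro σ' hσ'
    apply ContinuousOn.intervalIntegrable
    apply hWcont.mono
    rw [uIcc_of_le hσ'.1]
    exact Icc_subset_Icc le_rfl hσ'.2
  have hFTC : ∀ σ' ∈ Icc r R,
      (∫ x in r..σ', (∫ t in (0:ℝ)..1, J x t))
        = (∫ t in (0:ℝ)..1, deriv f (σ' * v t) * v t * g t * v t)
          - (∫ t in (0:ℝ)..1, deriv f (r * v t) * v t * g t * v t) := by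
    intro σ' hσ'
    apply intervalIntegral.integral_eq_sub_of_hasDeriv_right_of_le hσ'.1
    · exact hGcont.mono (Icc_subset_Icc le_rfl hσ'.2)
    · intro x hx
      exact (keyB x ⟨hx.1, lt_of_lt_of_le hx.2 hσ'.2⟩).hasDerivWithinAt
    · exact hWint σ' hσ'
  have hGW : ∀ σ ∈ Icc r R,
      HasDerivWithinAt (fun σ => ∫ t in (0:ℝ)..1, deriv f (σ * v t) * v t * g t * v t)
        (∫ t in (0:ℝ)..1, J σ t) (Icc r R) σ := by
    intro σ hσ
    haveI : Fact (σ ∈ Icc r R) := ⟨hσ⟩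
    have hmsaf : StronglyMeasurableAtFilter (fun x => ∫ t in (0:ℝ)..1, J x t)
        (nhdsWithin σ (Icc r R)) volume :=
      ⟨Icc r R, self_mem_nhdsWithin,
        ((hWcont.aemeasurable measurableSet_Icc).aestronglyMeasurable)⟩
    have hW1 : HasDerivWithinAt (fun u => ∫ x in r..u, (∫ t in (0:ℝ)..1, J x t))
        (∫ t in (0:ℝ)..1, J σ t) (Icc r R) σ :=
      intervalIntegral.integral_hasDerivWithinAt_right (hWint σ hσ) hmsaf (hWcont σ hσ)
    have hW2 := hW1.const_add (∫ t in (0:ℝ)..1, deriv f (r * v t) * v t * g t * v t)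
    apply hW2.congr
    · intro y hy; rw [hFTC y hy]; ring
    · rw [hFTC σ hσ]; ring
  -- the key lower bound for the second-derivative integral
  have hEst : ∀ σ ∈ Icc r R, 2 * Ctil * phi β ^ 3 * M ≤ ∫ t in (0:ℝ)..1, J σ t := by
    intro σ hσ
    have hle : ∀ t ∈ Icc (0:ℝ) 1, M * phi β ^ 3 * g t ≤ J σ t := by
      intro t ht
      by_cases hts : t ∈ Icc β (1-β)
      · have hJeq : J σ t = f'' (σ * v t) * v t * v t * g t * v t := by
          simp [hJdef, Set.indicator_of_mem hts]
        rw [hJeq]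
        have hx := hmaps σ hσ t hts
        have hf''x := hf''M _ hx
        have h1 := hvlb t hts
        have hg := hgnonneg t ht
        have hv3 : phi β ^ 3 ≤ v t * v t * v t := by
          have e0 : phi β * phi β ≤ v t * v t := mul_le_mul h1 h1 hφβ.le (hφβ.le.trans h1)
          have e0' : phi β * phi β * phi β ≤ v t * v t * v t :=
            mul_le_mul e0 h1 hφβ.le (mul_nonneg (hφβ.le.trans h1) (hφβ.le.trans h1))
          calc phi β ^ 3 = phi β * phi β * phi β := by ring
            _ ≤ v t * v t * v t := e0' 
        have hkey : M * phi β ^ 3 ≤ f'' (σ * v t) * (v t * v t * v t) := by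
          have e1 : M * phi β ^ 3 ≤ f'' (σ * v t) * phi β ^ 3 :=
            mul_le_mul_of_nonneg_right hf''x (by positivity)
          have e2 : f'' (σ * v t) * phi β ^ 3 ≤ f'' (σ * v t) * (v t * v t * v t) :=
            mul_le_mul_of_nonneg_left hv3 (by linarith)
          linarith
        calc M * phi β ^ 3 * g t ≤ (f'' (σ * v t) * (v t * v t * v t)) * g t :=
              mul_le_mul_of_nonneg_right hkey hg
          _ = f'' (σ * v t) * v t * v t * g t * v t := by ring
      · have hJeq : J σ t = 0 := by simp [hJdef, Set.indicator_of_notMem hts]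
        rw [hJeq, hgz t ht hts, mul_zero]
    have hint1 : IntervalIntegrable (fun t => M * phi β ^ 3 * g t) volume 0 1 :=
      hgint.const_mul _
    have hcomp := intervalIntegral.integral_mono_on zero_le_one hint1 (hJint σ hσ) hle
    have hInt_g : (∫ t in (0:ℝ)..1, M * phi β ^ 3 * g t)
        = M * phi β ^ 3 * ∫ t in (0:ℝ)..1, g t :=
      intervalIntegral.integral_const_mul _ _
    -- total integral of g equals 2·C̃
    have hgint_ab : IntervalIntegrable g volume 0 (1/2) := by
      apply hgint.mono_set
      rw [uIcc_of_le (by norm_num : (0:ℝ) ≤ 1/2), uIcc_of_le zero_le_one]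
      exact Icc_subset_Icc le_rfl (by norm_num)
    have hgint_bc : IntervalIntegrable g volume (1/2) 1 := by
      apply hgint.mono_set
      rw [uIcc_of_le (by norm_num : (1:ℝ)/2 ≤ 1), uIcc_of_le zero_le_one]
      exact Icc_subset_Icc (by norm_num) le_rfl
    have hgint_0β : IntervalIntegrable g volume 0 β := by
      apply hgint.mono_set
      rw [uIcc_of_le hβ0.le, uIcc_of_le zero_le_one]
      exact Icc_subset_Icc le_rfl (by linarith)
    have hgint_βh : IntervalIntegrable g volume β (1/2) := by
      apply hgint.mono_set
      rw [uIcc_of_le (by linarith : β ≤ 1/2), uIcc_of_le zero_le_one]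
      exact Icc_subset_Icc hβ0.le (by norm_num)
    have hflip : (∫ t in (1/2:ℝ)..1, g t) = ∫ t in (0:ℝ)..(1/2), g t := by
      have h1 := intervalIntegral.integral_comp_sub_left (a := (0:ℝ)) (b := 1/2) g 1
      have hb : (1:ℝ) - 1/2 = 1/2 := by norm_num
      have hc : (1:ℝ) - 0 = 1 := by norm_num
      rw [hb, hc] at h1
      rw [← h1]
      apply intervalIntegral.integral_congr
      intro x hx
      rw [uIcc_of_le (by norm_num : (0:ℝ) ≤ 1/2)] at hx
      exact (hgsymm x hx).symm
    have hzero : (∫ t in (0:ℝ)..β, g t) = 0 := by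
      have heqz : EqOn g (fun _ => (0:ℝ)) (uIcc 0 β) := by
        intro x hx; rw [uIcc_of_le hβ0.le] at hx; exact hg0 x hx
      rw [intervalIntegral.integral_congr heqz]
      simp
    have hsplit1 := intervalIntegral.integral_add_adjacent_intervals hgint_ab hgint_bc
    have hsplit2 := intervalIntegral.integral_add_adjacent_intervals hgint_0β hgint_βh
    have hgtot : (∫ t in (0:ℝ)..1, g t) = 2 * Ctil := by
      rw [hCtil]
      rw [hzero] at hsplit2
      linarith [hsplit1, hsplit2, hflip]
    calc 2 * Ctil * phi β ^ 3 * M = M * phi β ^ 3 * (2 * Ctil) := by ring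
      _ = M * phi β ^ 3 * ∫ t in (0:ℝ)..1, g t := by rw [hgtot]
      _ = ∫ t in (0:ℝ)..1, M * phi β ^ 3 * g t := hInt_g.symm
      _ ≤ ∫ t in (0:ℝ)..1, J σ t := hcomp
  have hposbd : 0 < 2 * Ctil * phi β ^ 3 * M := by positivity
  -- derivative of h itself
  have hh' : ∀ σ₀ : ℝ,
      HasDerivAt (fun σ : ℝ => σ - ∫ t in (0:ℝ)..1, f (σ * v t) * g t * v t)
        (1 - ∫ t in (0:ℝ)..1, deriv f (σ₀ * v t) * v t * g t * v t) σ₀ :=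
    fun σ₀ => (hasDerivAt_id σ₀).sub (keyA σ₀).2
  constructor
  · -- strict concavity
    apply strictConcaveOn_of_deriv2_neg (convex_Icc r R)
    · exact fun σ _ => (hh' σ).differentiableAt.continuousAt.continuousWithinAt
    · intro x hx
      rw [interior_Icc] at hx
      have hd1 : deriv (fun σ : ℝ => σ - ∫ t in (0:ℝ)..1, f (σ * v t) * g t * v t)
          = fun σ => 1 - ∫ t in (0:ℝ)..1, deriv f (σ * v t) * v t * g t * v t :=
        funext fun σ => (hh' σ).deriv
      have hd2 : HasDerivAt
          (fun σ => 1 - ∫ t in (0:ℝ)..1, deriv f (σ * v t) * v t * g t * v t)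
          (-(∫ t in (0:ℝ)..1, J x t)) x := (keyB x hx).const_sub 1
      have hit : deriv^[2] (fun σ : ℝ => σ - ∫ t in (0:ℝ)..1, f (σ * v t) * g t * v t) x
          = -(∫ t in (0:ℝ)..1, J x t) := by
        have : deriv^[2] (fun σ : ℝ => σ - ∫ t in (0:ℝ)..1, f (σ * v t) * g t * v t)
            = deriv (deriv (fun σ : ℝ => σ - ∫ t in (0:ℝ)..1, f (σ * v t) * g t * v t)) := by
          simp [Function.iterate_succ, Function.iterate_zero, Function.comp_def]
        rw [this, hd1]
        exact hd2.deriv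
      rw [hit]
      have := hEst x (Ioo_subset_Icc_self hx)
      linarith
  · refine ⟨fun σ => 1 - ∫ t in (0:ℝ)..1, deriv f (σ * v t) * v t * g t * v t,
      fun σ => -(∫ t in (0:ℝ)..1, J σ t), fun σ hσ => ⟨(hh' σ).hasDerivWithinAt,
      (hGW σ hσ).const_sub 1, ?_, ?_⟩⟩
    · have h1 := hEst σ hσ
      show -(∫ t in (0:ℝ)..1, J σ t) ≤ -2 * Ctil * phi β ^ 3 * M
      have h2 : -2 * Ctil * phi β ^ 3 * M = -(2 * Ctil * phi β ^ 3 * M) := by ring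
      rw [h2]; linarith
    · have h2 : -2 * Ctil * phi β ^ 3 * M = -(2 * Ctil * phi β ^ 3 * M) := by ring
      rw [h2]; linarith
end

section
/- Assume (H2): there exists a continuous function θ : [0,R] → ℝ with θ(t) > 0 for t ∈ (0,R] such that t f'(t) − f(t) ≥ θ(t) for all t ∈ [0,R], and assume C̃ = ∫_β^{1/2} g(t) dt > 0. Let u ∈ K satisfy r < ‖u‖ < R and the Nehari constraint ∫₀¹ u'(t)² dt = ∫₀¹ f(u(t)) g(t) u(t) dt. Then ∫₀¹ u'(t)² dt − ∫₀¹ f'(u(t)) g(t) u(t)² dt ≤ −2 C̃ r φ(β) · min_{s ∈ [rφ(β), R]} θ(s) < 0. -/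
open Set MeasureTheory

set_option maxHeartbeats 1000000

lemma aux_int (g : ℝ → ℝ) (hgmeas : Measurable g) (M : ℝ)
    (hgbd : ∀ t ∈ Icc (0:ℝ) 1, |g t| ≤ M)
    (c d : ℝ → ℝ) (hc : ContinuousOn c (Icc 0 1)) (hd : ContinuousOn d (Icc 0 1))
    (a b : ℝ) (hab : a ≤ b) (ha : 0 ≤ a) (hb : b ≤ 1) :
    IntervalIntegrable (fun t => c t * g t * d t) volume a b := by
  rw [intervalIntegrable_iff_integrableOn_Ioc_of_le hab]
  have hsub : Ioc a b ⊆ Icc (0:ℝ) 1 := fun x hx => ⟨le_trans ha (le_of_lt hx.1), le_trans hx.2 hb⟩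
  obtain ⟨C, hC⟩ := (isCompact_Icc : IsCompact (Icc (0:ℝ) 1)).exists_bound_of_continuousOn hc
  obtain ⟨D, hD⟩ := (isCompact_Icc : IsCompact (Icc (0:ℝ) 1)).exists_bound_of_continuousOn hd
  have hM : 0 ≤ M := le_trans (abs_nonneg _) (hgbd 0 ⟨le_rfl, zero_le_one⟩)
  have hC0 : 0 ≤ C := le_trans (norm_nonneg _) (hC 0 ⟨le_rfl, zero_le_one⟩)
  have hD0 : 0 ≤ D := le_trans (norm_nonneg _) (hD 0 ⟨le_rfl, zero_le_one⟩)
  apply MeasureTheory.Integrable.mono' (g := fun _ => C * M * D)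
    (integrableOn_const measure_Ioc_lt_top.ne)
  · exact (((hc.mono hsub).aestronglyMeasurable measurableSet_Ioc).mul
      (hgmeas.aestronglyMeasurable.restrict)).mul
      ((hd.mono hsub).aestronglyMeasurable measurableSet_Ioc)
  · filter_upwards [ae_restrict_mem measurableSet_Ioc] with t ht
    have ht' : t ∈ Icc (0:ℝ) 1 := hsub ht
    have h1 := hC t ht'
    have h2 := hgbd t ht'
    have h3 := hD t ht'
    have : ‖c t * g t * d t‖ = ‖c t‖ * |g t| * ‖d t‖ := by
      simp [abs_mul, Real.norm_eq_abs]
    rw [this]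
    exact mul_le_mul (mul_le_mul h1 h2 (abs_nonneg _) hC0) h3 (norm_nonneg _) (by positivity)

/-- Under condition (H2), for every `u` in the cone satisfying the Nehari
constraint with `r < ‖u‖ < R`, the quantity `E''(u)(u,u)` is negative, quantitatively. -/
theorem second_derivative_negative_of_H2
    (f : ℝ → ℝ) (hf : ContDiff ℝ 1 f)
    (hfmono : MonotoneOn f (Ici (0:ℝ)))
    (hf0 : 0 ≤ f 0) (hfpos : ∀ t : ℝ, 0 < t → 0 < f t)
    (g : ℝ → ℝ) (hgnonneg : ∀ t ∈ Icc (0:ℝ) 1, 0 ≤ g t)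
    (hgbdd : ∃ M : ℝ, ∀ t ∈ Icc (0:ℝ) 1, g t ≤ M)
    (hgmeas : Measurable g)
    (hgmono : MonotoneOn g (Icc (0:ℝ) (1/2)))
    (hgsymm : ∀ t ∈ Icc (0:ℝ) (1/2), g t = g (1 - t))
    (r R : ℝ) (hr : 0 < r) (hrR : r < R)
    (β : ℝ) (hβ : β ∈ Ioo (0:ℝ) (1/4))
    (Ctil : ℝ) (hCtil : Ctil = ∫ t in β..(1/2:ℝ), g t) (hCpos : 0 < Ctil)
    -- condition (H2)
    (θ : ℝ → ℝ) (hθcont : ContinuousOn θ (Icc 0 R))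
    (hθpos : ∀ t ∈ Ioc (0:ℝ) R, 0 < θ t)
    (hAR : ∀ t ∈ Icc (0:ℝ) R, θ t ≤ t * deriv f t - f t)
    -- u in the cone, localized, satisfying the Nehari constraint
    (u : ℝ → ℝ) (hu : memK u) (hur : r < normH u) (huR : normH u < R)
    (hNehari : (∫ t in (0:ℝ)..1, deriv u t ^ 2) = ∫ t in (0:ℝ)..1, f (u t) * g t * u t) :
    (∫ t in (0:ℝ)..1, deriv u t ^ 2) - (∫ t in (0:ℝ)..1, deriv f (u t) * g t * u t ^ 2) ≤
      -2 * Ctil * r * phi β * sInf (θ '' Icc (r * phi β) R) ∧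
    -2 * Ctil * r * phi β * sInf (θ '' Icc (r * phi β) R) < 0 := by
  obtain ⟨hdiff, hderiv, hu0, hu1, hsymm, humono, huharn⟩ := hu
  obtain ⟨M, hgbd⟩ := hgbdd
  obtain ⟨hβ0, hβ4⟩ := hβ
  have hN2 : (normH u) ^ 2 = ∫ t in (0:ℝ)..1, deriv u t ^ 2 :=
    Real.sq_sqrt (intervalIntegral.integral_nonneg (by norm_num) (fun t _ => sq_nonneg _))
  set N := normH u with hN
  have hN0 : 0 < N := lt_trans hr hur
  have ucont : ContinuousOn u (Icc 0 1) :=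
    fun t ht => (hdiff t ht).continuousAt.continuousWithinAt
  have hphiβ : 0 < phi β := by unfold phi; nlinarith
  have hphiβ1 : phi β < 1 := by unfold phi; nlinarith
  have hrφr : r * phi β < r := by nlinarith
  have hrφ0 : 0 < r * phi β := by positivity
  -- nonnegativity and maximality of u(1/2)
  have unonneg : ∀ t ∈ Icc (0:ℝ) 1, 0 ≤ u t := by
    intro t ht
    rcases le_or_gt t (1/2) with h | h
    · have := huharn t ⟨ht.1, h⟩
      have hp : 0 ≤ phi t := by unfold phi; nlinarith [ht.1]
      nlinarith
    · have h1 : (1 - t) ∈ Icc (0:ℝ) (1/2) := ⟨by linarith [ht.2], by linarith⟩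
      have := huharn (1 - t) h1
      have hp : 0 ≤ phi (1 - t) := by unfold phi; nlinarith [ht.2]
      have hs := hsymm t ht
      nlinarith
  have humax : ∀ t ∈ Icc (0:ℝ) 1, u t ≤ u (1/2) := by
    intro t ht
    rcases le_or_gt t (1/2) with h | h
    · exact humono ⟨ht.1, h⟩ ⟨by norm_num, le_rfl⟩ h
    · have h1 : (1 - t) ∈ Icc (0:ℝ) (1/2) := ⟨by linarith [ht.2], by linarith⟩
      rw [hsymm t ht]
      exact humono h1 ⟨by norm_num, le_rfl⟩ h1.2
  -- integrability of (deriv u)^2 on subintervals of [0,1]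
  have hIu2 : ∀ a b : ℝ, 0 ≤ a → a ≤ b → b ≤ 1 →
      IntervalIntegrable (fun t => deriv u t ^ 2) volume a b := by
    intro a b ha hab hb
    apply ContinuousOn.intervalIntegrable
    apply (hderiv.mono _).pow 2
    rw [uIcc_of_le hab]; exact Icc_subset_Icc ha hb
  have hIdu : ∀ a b : ℝ, 0 ≤ a → a ≤ b → b ≤ 1 →
      IntervalIntegrable (deriv u) volume a b := by
    intro a b ha hab hb
    apply ContinuousOn.intervalIntegrable
    apply hderiv.mono
    rw [uIcc_of_le hab]; exact Icc_subset_Icc ha hb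
  -- u(1/2) < R via elementary Cauchy–Schwarz
  have huhalfR : u (1/2) < R := by
    have hftc : ∫ t in (0:ℝ)..(1/2), deriv u t = u (1/2) - u 0 := by
      apply intervalIntegral.integral_deriv_eq_sub
      · intro x hx
        apply hdiff
        rw [uIcc_of_le (by norm_num : (0:ℝ) ≤ 1/2)] at hx
        exact ⟨hx.1, by linarith [hx.2]⟩
      · exact hIdu 0 (1/2) le_rfl (by norm_num) (by norm_num)
    have hptw : ∀ t ∈ Icc (0:ℝ) (1/2), 2 * N * deriv u t ≤ deriv u t ^ 2 + N ^ 2 := by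
      intro t _; nlinarith [sq_nonneg (deriv u t - N)]
    have hmono := intervalIntegral.integral_mono_on (by norm_num : (0:ℝ) ≤ 1/2)
      ((hIdu 0 (1/2) le_rfl (by norm_num) (by norm_num)).const_mul (2 * N))
      ((hIu2 0 (1/2) le_rfl (by norm_num) (by norm_num)).add
        (intervalIntegrable_const))
      hptw
    rw [intervalIntegral.integral_const_mul, hftc, hu0, sub_zero,
      intervalIntegral.integral_add (hIu2 0 (1/2) le_rfl (by norm_num) (by norm_num))
        intervalIntegrable_const,
      intervalIntegral.integral_const] at hmono
    have hsplit : ∫ t in (0:ℝ)..(1/2), deriv u t ^ 2 ≤ ∫ t in (0:ℝ)..1, deriv u t ^ 2 := by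
      have := intervalIntegral.integral_add_adjacent_intervals
        (hIu2 0 (1/2) le_rfl (by norm_num) (by norm_num))
        (hIu2 (1/2) 1 (by norm_num) (by norm_num) le_rfl)
      have h2 : 0 ≤ ∫ t in (1/2:ℝ)..1, deriv u t ^ 2 :=
        intervalIntegral.integral_nonneg (by norm_num) (fun t _ => sq_nonneg _)
      linarith [this]
    have : 2 * N * u (1/2) ≤ (∫ t in (0:ℝ)..1, deriv u t ^ 2) + (1/2) * N ^ 2 := by
      simp only [smul_eq_mul] at hmono
      nlinarith
    nlinarith
  have huub : ∀ t ∈ Icc (0:ℝ) 1, u t ≤ R :=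
    fun t ht => le_of_lt (lt_of_le_of_lt (humax t ht) huhalfR)
  have hulb : ∀ t ∈ Icc β (1/2), r * phi β ≤ u t := by
    intro t ht
    have hβI : β ∈ Icc (0:ℝ) (1/2) := ⟨le_of_lt hβ0, by linarith⟩
    have h1 : u β ≤ u t := humono hβI ⟨by linarith [ht.1], ht.2⟩ ht.1
    have h2 := huharn β hβI
    nlinarith
  -- the infimum of θ
  set m : ℝ := sInf (θ '' Icc (r * phi β) R) with hm
  have hSsub : Icc (r * phi β) R ⊆ Icc 0 R := Icc_subset_Icc (le_of_lt hrφ0) le_rfl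
  have hSne : Set.Nonempty (Icc (r * phi β) R) := ⟨r * phi β, le_rfl, by linarith⟩
  obtain ⟨x, hxS, hxmin⟩ := isCompact_Icc.exists_isMinOn hSne (hθcont.mono hSsub)
  have hbdd : BddBelow (θ '' Icc (r * phi β) R) := by
    refine ⟨θ x, ?_⟩
    rintro y ⟨s, hs, rfl⟩
    exact hxmin hs
  have hmθx : m = θ x := by
    apply le_antisymm (csInf_le hbdd ⟨x, hxS, rfl⟩)
    have hne : (θ '' Icc (r * phi β) R).Nonempty := ⟨θ x, ⟨x, hxS, rfl⟩⟩
    apply le_csInf hne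
    rintro y ⟨s, hs, rfl⟩
    exact hxmin hs
  have hmpos : 0 < m := by
    rw [hmθx]
    exact hθpos x ⟨lt_of_lt_of_le hrφ0 hxS.1, hxS.2⟩
  have hmle : ∀ s ∈ Icc (r * phi β) R, m ≤ θ s :=
    fun s hs => csInf_le hbdd ⟨s, hs, rfl⟩
  -- the key integrand
  set h : ℝ → ℝ := fun t => (u t * deriv f (u t) - f (u t)) * g t * u t with hh
  have hgabs : ∀ t ∈ Icc (0:ℝ) 1, |g t| ≤ M := by
    intro t ht
    rw [abs_of_nonneg (hgnonneg t ht)]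
    exact hgbd t ht
  have hcderiv : Continuous (deriv f) := hf.continuous_deriv le_rfl
  have hcA : ContinuousOn (fun t => u t * deriv f (u t) - f (u t)) (Icc (0:ℝ) 1) :=
    (ucont.mul (hcderiv.comp_continuousOn ucont)).sub (hf.continuous.comp_continuousOn ucont)
  have hIh : ∀ a b : ℝ, 0 ≤ a → a ≤ b → b ≤ 1 → IntervalIntegrable h volume a b :=
    fun a b ha hab hb => aux_int g hgmeas M hgabs _ u hcA ucont a b hab ha hb
  have hI1 : IntervalIntegrable (fun t => f (u t) * g t * u t) volume 0 1 :=
    aux_int g hgmeas M hgabs _ u (hf.continuous.comp_continuousOn ucont) ucont 0 1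
      (by norm_num) le_rfl le_rfl
  have hI2 : IntervalIntegrable (fun t => deriv f (u t) * g t * u t ^ 2) volume 0 1 :=
    aux_int g hgmeas M hgabs _ (fun t => u t ^ 2) (hcderiv.comp_continuousOn ucont)
      (ucont.pow 2) 0 1 (by norm_num) le_rfl le_rfl
  have hIg : ∀ a b : ℝ, 0 ≤ a → a ≤ b → b ≤ 1 → IntervalIntegrable g volume a b := by
    intro a b ha hab hb
    have := aux_int g hgmeas M hgabs (fun _ => 1) (fun _ => 1)
      continuousOn_const continuousOn_const a b hab ha hb
    simpa using this
  -- pointwise nonnegativity of h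
  have hA_ge : ∀ t ∈ Icc (0:ℝ) 1, 0 < u t → θ (u t) ≤ u t * deriv f (u t) - f (u t) := by
    intro t ht hpos
    exact hAR (u t) ⟨le_of_lt hpos, huub t ht⟩
  have h_nonneg : ∀ t ∈ Icc (0:ℝ) 1, 0 ≤ h t := by
    intro t ht
    rcases eq_or_lt_of_le (unonneg t ht) with heq | hpos
    · simp [hh, ← heq]
    · have h1 := hA_ge t ht hpos
      have h2 := hθpos (u t) ⟨hpos, huub t ht⟩
      have h3 := hgnonneg t ht
      have : 0 ≤ u t * deriv f (u t) - f (u t) := by linarith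
      exact mul_nonneg (mul_nonneg this h3) (le_of_lt hpos)
  -- pointwise lower bound on [β, 1/2]
  have h_lb : ∀ t ∈ Icc β (1/2), (r * phi β * m) * g t ≤ h t := by
    intro t ht
    have ht01 : t ∈ Icc (0:ℝ) 1 := ⟨by linarith [ht.1], by linarith [ht.2]⟩
    have hul := hulb t ht
    have huu := huub t ht01
    have hA : m ≤ u t * deriv f (u t) - f (u t) :=
      le_trans (hmle (u t) ⟨hul, huu⟩) (hA_ge t ht01 (lt_of_lt_of_le hrφ0 hul))
    have hg0 := hgnonneg t ht01
    have hu0' : 0 ≤ u t := le_trans (le_of_lt hrφ0) hul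
    calc (r * phi β * m) * g t = m * g t * (r * phi β) := by ring
      _ ≤ m * g t * u t := by
          apply mul_le_mul_of_nonneg_left hul (mul_nonneg (le_of_lt hmpos) hg0)
      _ ≤ (u t * deriv f (u t) - f (u t)) * g t * u t := by
          apply mul_le_mul_of_nonneg_right _ hu0'
          exact mul_le_mul_of_nonneg_right hA hg0
  -- symmetry of h
  have h_symm_int : (∫ t in (1/2:ℝ)..(1 - β), h t) = ∫ t in β..(1/2:ℝ), h t := by
    have e1 : (∫ t in β..(1/2:ℝ), h (1 - t)) = ∫ t in (1 - 1/2 : ℝ)..(1 - β), h t :=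
      intervalIntegral.integral_comp_sub_left h 1
    have e2 : (∫ t in β..(1/2:ℝ), h (1 - t)) = ∫ t in β..(1/2:ℝ), h t := by
      apply intervalIntegral.integral_congr
      intro t ht
      rw [uIcc_of_le (by linarith : β ≤ (1/2:ℝ))] at ht
      have ht01 : t ∈ Icc (0:ℝ) 1 := ⟨by linarith [ht.1], by linarith [ht.2]⟩
      have ht02 : t ∈ Icc (0:ℝ) (1/2) := ⟨by linarith [ht.1], ht.2⟩
      show (u (1-t) * deriv f (u (1-t)) - f (u (1-t))) * g (1-t) * u (1-t) = _
      rw [← hsymm t ht01, ← hgsymm t ht02]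
    rw [← e2, e1]
    norm_num
  -- main integral estimate
  have hsplit2 : (∫ t in (0:ℝ)..1, h t) =
      (∫ t in (0:ℝ)..β, h t) + ((∫ t in β..(1/2:ℝ), h t) +
        ((∫ t in (1/2:ℝ)..(1-β), h t) + (∫ t in (1-β:ℝ)..1, h t))) := by
    have i1 := hIh 0 β le_rfl (le_of_lt hβ0) (by linarith)
    have i2 := hIh β (1/2) (le_of_lt hβ0) (by linarith) (by norm_num)
    have i3 := hIh (1/2) (1-β) (by norm_num) (by linarith) (by linarith)
    have i4 := hIh (1-β) 1 (by linarith) (by linarith) le_rfl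
    rw [intervalIntegral.integral_add_adjacent_intervals i3 i4,
      intervalIntegral.integral_add_adjacent_intervals i2 (i3.trans i4),
      intervalIntegral.integral_add_adjacent_intervals i1 ((i2.trans i3).trans i4)]
  have P1 : 0 ≤ ∫ t in (0:ℝ)..β, h t :=
    intervalIntegral.integral_nonneg (le_of_lt hβ0)
      (fun t ht => h_nonneg t ⟨ht.1, by linarith [ht.2]⟩)
  have P4 : 0 ≤ ∫ t in (1-β:ℝ)..1, h t :=
    intervalIntegral.integral_nonneg (by linarith)
      (fun t ht => h_nonneg t ⟨by linarith [ht.1], ht.2⟩)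
  have P2 : r * phi β * m * Ctil ≤ ∫ t in β..(1/2:ℝ), h t := by
    have hmono := intervalIntegral.integral_mono_on (by linarith : β ≤ (1/2:ℝ))
      ((hIg β (1/2) (le_of_lt hβ0) (by linarith) (by norm_num)).const_mul (r * phi β * m))
      (hIh β (1/2) (le_of_lt hβ0) (by linarith) (by norm_num))
      h_lb
    rw [intervalIntegral.integral_const_mul, ← hCtil] at hmono
    exact hmono
  have htotal : 2 * Ctil * r * phi β * m ≤ ∫ t in (0:ℝ)..1, h t := by
    rw [hsplit2, h_symm_int]
    linarith
  -- conclusion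
  constructor
  · have e1 : (∫ t in (0:ℝ)..1, deriv u t ^ 2) - (∫ t in (0:ℝ)..1, deriv f (u t) * g t * u t ^ 2) =
        -∫ t in (0:ℝ)..1, h t := by
      rw [hNehari, ← intervalIntegral.integral_sub hI1 hI2,
        ← intervalIntegral.integral_neg]
      apply intervalIntegral.integral_congr
      intro t _
      show f (u t) * g t * u t - deriv f (u t) * g t * u t ^ 2 = _
      simp only [hh]
      ring
    rw [e1]
    linarith
  · have : 0 < 2 * Ctil * r * phi β * m := by positivity
    linarith
end

section
/- Assume (H3): there exist μ > 1 and λ > 0 such that t f'(t) − μ f(t) ≥ 0 and f'(t) ≥ λ for all t ∈ [rφ(β), R], and B̃ f(rφ(β)) < λ C̃ (1 − 1/μ) r φ(β). Let u ∈ K satisfy r < ‖u‖ < R and the Nehari constraint ∫₀¹ u'(t)² dt = ∫₀¹ f(u(t)) g(t) u(t) dt. Then ∫₀¹ u'(t)² dt − ∫₀¹ f'(u(t)) g(t) u(t)² dt ≤ 2 r φ(β) ( B̃ f(rφ(β)) − λ C̃ (1 − 1/μ) r φ(β) ) < 0. -/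
open Set

set_option maxHeartbeats 2000000 in
/-- Under condition (H3), for every `u` in the cone satisfying the Nehari
constraint with `r < ‖u‖ < R`, the quantity `E''(u)(u,u)` is negative, quantitatively. -/
theorem second_derivative_negative_of_H3
    (f : ℝ → ℝ) (hf : ContDiff ℝ 1 f)
    (hfmono : MonotoneOn f (Ici (0:ℝ)))
    (hf0 : 0 ≤ f 0) (hfpos : ∀ t : ℝ, 0 < t → 0 < f t)
    (g : ℝ → ℝ) (hgnonneg : ∀ t ∈ Icc (0:ℝ) 1, 0 ≤ g t)
    (hgbdd : ∃ M : ℝ, ∀ t ∈ Icc (0:ℝ) 1, g t ≤ M)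
    (hgmeas : Measurable g)
    (hgmono : MonotoneOn g (Icc (0:ℝ) (1/2)))
    (hgsymm : ∀ t ∈ Icc (0:ℝ) (1/2), g t = g (1 - t))
    (r R : ℝ) (hr : 0 < r) (hrR : r < R)
    (β : ℝ) (hβ : β ∈ Ioo (0:ℝ) (1/4))
    (Btil Ctil : ℝ)
    (hBtil : Btil = ∫ t in (0:ℝ)..β, g t)
    (hCtil : Ctil = ∫ t in β..(1/2:ℝ), g t)
    -- condition (H3)
    (μ lam : ℝ) (hμ : 1 < μ) (hlam : 0 < lam)
    (hAR : ∀ t ∈ Icc (r * phi β) R, 0 ≤ t * deriv f t - μ * f t)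
    (hf'lam : ∀ t ∈ Icc (r * phi β) R, lam ≤ deriv f t)
    (hBC : Btil * f (r * phi β) < lam * Ctil * (1 - 1 / μ) * (r * phi β))
    -- u in the cone, localized, satisfying the Nehari constraint
    (u : ℝ → ℝ) (hu : memK u) (hur : r < normH u) (huR : normH u < R)
    (hNehari : (∫ t in (0:ℝ)..1, deriv u t ^ 2) = ∫ t in (0:ℝ)..1, f (u t) * g t * u t) :
    (∫ t in (0:ℝ)..1, deriv u t ^ 2) - (∫ t in (0:ℝ)..1, deriv f (u t) * g t * u t ^ 2) ≤
      2 * r * phi β * (Btil * f (r * phi β) - lam * Ctil * (1 - 1 / μ) * (r * phi β)) ∧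
    2 * r * phi β * (Btil * f (r * phi β) - lam * Ctil * (1 - 1 / μ) * (r * phi β)) < 0 := by
  obtain ⟨hudiff, hu'cont, hu0, hu1, husymm, humono, huharn⟩ := hu
  obtain ⟨hβ0, hβ14⟩ := hβ
  have hβhalf : β ≤ (1/2:ℝ) := by linarith
  set N := normH u with hNdef
  have hN0 : (0:ℝ) < N := lt_trans hr hur
  have hφβ : 0 < phi β := by unfold phi; nlinarith
  set ρ := r * phi β with hρdef
  have hρ0 : 0 < ρ := mul_pos hr hφβ
  have hfρ : 0 < f ρ := hfpos _ hρ0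
  have hμ0 : (0:ℝ) < μ := lt_trans one_pos hμ
  have hν : (0:ℝ) < 1 - 1/μ := by
    rw [sub_pos, div_lt_one hμ0]; exact hμ
  have hsecond : 2 * r * phi β * (Btil * f ρ - lam * Ctil * (1 - 1 / μ) * ρ) < 0 := by
    have h2r : (0:ℝ) < 2 * r * phi β := mul_pos (by linarith) hφβ
    exact mul_neg_of_pos_of_neg h2r (sub_neg.mpr hBC)
  refine ⟨?_, hsecond⟩
  -- continuity facts
  have hucont : ContinuousOn u (Icc (0:ℝ) 1) :=
    fun t ht => (hudiff t ht).continuousAt.continuousWithinAt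
  have hfc : Continuous f := hf.continuous
  have hf'c : Continuous (deriv f) := hf.continuous_deriv le_rfl
  -- integrability of g-products
  have key : ∀ ψ : ℝ → ℝ, ContinuousOn ψ (Icc (0:ℝ) 1) →
      MeasureTheory.IntegrableOn (fun t => g t * ψ t) (Icc (0:ℝ) 1) := by
    intro ψ hψ
    obtain ⟨C, hC⟩ := (isCompact_Icc (a := (0:ℝ)) (b := 1)).exists_bound_of_continuousOn hψ
    obtain ⟨M, hM⟩ := hgbdd
    have hM0 : (0:ℝ) ≤ M := le_trans (hgnonneg 0 (by norm_num)) (hM 0 (by norm_num))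
    refine (MeasureTheory.integrable_const (M * C)).mono'
      ((hgmeas.aestronglyMeasurable.restrict).mul
        (hψ.aestronglyMeasurable measurableSet_Icc)) ?_
    filter_upwards [MeasureTheory.ae_restrict_mem measurableSet_Icc] with t ht
    have h1 := hC t ht
    have hC0 : (0:ℝ) ≤ C := le_trans (norm_nonneg _) h1
    rw [Real.norm_eq_abs, abs_mul, abs_of_nonneg (hgnonneg t ht)]
    exact mul_le_mul (hM t ht) (by simpa [Real.norm_eq_abs] using h1) (abs_nonneg _) hM0
  have keyI : ∀ (a b : ℝ) (ψ : ℝ → ℝ), 0 ≤ a → a ≤ b → b ≤ 1 → ContinuousOn ψ (Icc (0:ℝ) 1) →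
      IntervalIntegrable (fun t => g t * ψ t) MeasureTheory.volume a b := by
    intro a b ψ ha hab hb1 hψ
    exact ((key ψ hψ).mono_set
      (by rw [uIcc_of_le hab]; exact Icc_subset_Icc ha hb1)).intervalIntegrable
  -- the integrand
  set h : ℝ → ℝ := fun t => g t * (u t * (f (u t) - deriv f (u t) * u t)) with hh
  have hψh : ContinuousOn (fun t => u t * (f (u t) - deriv f (u t) * u t)) (Icc (0:ℝ) 1) :=
    hucont.mul (((hfc.comp_continuousOn hucont)).sub
      ((hf'c.comp_continuousOn hucont).mul hucont))
  have hIh : ∀ a b : ℝ, 0 ≤ a → a ≤ b → b ≤ 1 → IntervalIntegrable h MeasureTheory.volume a b :=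
    fun a b ha hab hb1 => keyI a b _ ha hab hb1 hψh
  -- nonnegativity of u on [0,1/2]
  have huphi : ∀ t ∈ Icc (0:ℝ) (1/2), 0 ≤ phi t := by
    intro t ht; unfold phi; nlinarith [ht.1, ht.2]
  have hupos : ∀ t ∈ Icc (0:ℝ) (1/2), 0 ≤ u t :=
    fun t ht => le_trans (mul_nonneg (huphi t ht) hN0.le) (huharn t ht)
  -- integrability of (deriv u)^2
  have hu'sq : ContinuousOn (fun t => deriv u t ^ 2) (Icc (0:ℝ) 1) := hu'cont.pow 2
  have hNsq : N ^ 2 = ∫ t in (0:ℝ)..1, deriv u t ^ 2 := by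
    rw [hNdef]; unfold normH
    exact Real.sq_sqrt (intervalIntegral.integral_nonneg (by norm_num)
      (fun t _ => sq_nonneg _))
  -- the sup bound u t ≤ N on [0,1]
  have husup : ∀ t ∈ Icc (0:ℝ) 1, u t ≤ N := by
    intro t ht
    have hsub : Icc (0:ℝ) t ⊆ Icc (0:ℝ) 1 := Icc_subset_Icc le_rfl ht.2
    have hsub' : Icc t (1:ℝ) ⊆ Icc (0:ℝ) 1 := Icc_subset_Icc ht.1 le_rfl
    have hFTC : u t = ∫ s in (0:ℝ)..t, deriv u s := by
      have h1 : ∫ s in (0:ℝ)..t, deriv u s = u t - u 0 :=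
        intervalIntegral.integral_deriv_eq_sub
          (fun x hx => hudiff x (hsub (by rwa [uIcc_of_le ht.1] at hx)))
          ((hu'cont.mono hsub).intervalIntegrable_of_Icc ht.1)
      rw [h1, hu0, sub_zero]
    have hint1 : IntervalIntegrable (deriv u) MeasureTheory.volume 0 t :=
      (hu'cont.mono hsub).intervalIntegrable_of_Icc ht.1
    have hint2 : IntervalIntegrable (fun s => deriv u s ^ 2 / (2*N) + N/2)
        MeasureTheory.volume 0 t :=
      ((((hu'cont.mono hsub).pow 2).div_const _).add continuousOn_const).intervalIntegrable_of_Icc ht.1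
    have hint3 : IntervalIntegrable (fun s => deriv u s ^ 2) MeasureTheory.volume 0 t :=
      ((hu'cont.mono hsub).pow 2).intervalIntegrable_of_Icc ht.1
    have hint4 : IntervalIntegrable (fun s => deriv u s ^ 2) MeasureTheory.volume t 1 :=
      ((hu'cont.mono hsub').pow 2).intervalIntegrable_of_Icc ht.2
    have h2 : ∫ s in (0:ℝ)..t, deriv u s ≤ ∫ s in (0:ℝ)..t, (deriv u s ^ 2 / (2*N) + N/2) := by
      apply intervalIntegral.integral_mono_on ht.1 hint1 hint2
      intro s _
      have hsq : (0:ℝ) ≤ (deriv u s - N)^2 := sq_nonneg _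
      have h2N : (0:ℝ) < 2*N := by linarith
      rw [← sub_nonneg]
      have e : deriv u s ^ 2 / (2*N) + N/2 - deriv u s = (deriv u s - N)^2 / (2*N) := by
        field_simp; ring
      rw [e]; positivity
    have h3 : ∫ s in (0:ℝ)..t, (deriv u s ^ 2 / (2*N) + N/2)
        = (∫ s in (0:ℝ)..t, deriv u s ^ 2) / (2*N) + N/2 * t := by
      rw [intervalIntegral.integral_add (hint3.div_const _) intervalIntegrable_const,
        intervalIntegral.integral_div, intervalIntegral.integral_const]
      simp; ring
    have h4 : ∫ s in (0:ℝ)..t, deriv u s ^ 2 ≤ N ^ 2 := by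
      rw [hNsq]
      have hadd := intervalIntegral.integral_add_adjacent_intervals hint3 hint4
      have h5 : (0:ℝ) ≤ ∫ s in t..(1:ℝ), deriv u s ^ 2 :=
        intervalIntegral.integral_nonneg ht.2 (fun s _ => sq_nonneg _)
      linarith
    have h6 : (∫ s in (0:ℝ)..t, deriv u s ^ 2) / (2*N) ≤ N / 2 := by
      rw [div_le_iff₀ (by linarith : (0:ℝ) < 2*N)]
      have e6 : N / 2 * (2 * N) = N ^ 2 := by ring
      linarith
    have h7 : N/2 * t ≤ N/2 := by
      have := mul_le_of_le_one_right (by linarith : (0:ℝ) ≤ N/2) ht.2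
      linarith
    calc u t = ∫ s in (0:ℝ)..t, deriv u s := hFTC
      _ ≤ (∫ s in (0:ℝ)..t, deriv u s ^ 2) / (2*N) + N/2 * t := by rw [← h3]; exact h2
      _ ≤ N/2 + N/2 := add_le_add h6 h7
      _ = N := by ring
  -- deriv f is nonnegative on [0,∞)
  have hf'nonneg : ∀ s : ℝ, 0 ≤ s → 0 ≤ deriv f s := by
    intro s hs
    have hd : HasDerivAt f (deriv f s) s := ((hf.differentiable one_ne_zero) s).hasDerivAt
    have h1 : Filter.Tendsto (slope f s) (nhdsWithin s (Ioi s)) (nhds (deriv f s)) :=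
      (hasDerivAt_iff_tendsto_slope.mp hd).mono_left
        (nhdsWithin_mono s (fun x hx => (Set.mem_compl_singleton_iff).2 (ne_of_gt hx)))
    refine ge_of_tendsto h1 ?_
    filter_upwards [self_mem_nhdsWithin] with x hx
    have hx' : s < x := hx
    rw [slope_def_field]
    exact div_nonneg (sub_nonneg.2 (hfmono hs (le_trans hs hx'.le) hx'.le))
      (sub_nonneg.2 hx'.le)
  -- the key pointwise inequality from (H3)
  have hkey : ∀ s : ℝ, ρ ≤ s → s ≤ R → f s - deriv f s * s ≤ -((1 - 1/μ) * lam * ρ) := by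
    intro s h1 h2
    have hA := hAR s ⟨h1, h2⟩
    have hL := hf'lam s ⟨h1, h2⟩
    have hs0 : (0:ℝ) < s := lt_of_lt_of_le hρ0 h1
    have h4 : ρ * lam ≤ s * deriv f s := mul_le_mul h1 hL hlam.le hs0.le
    have hgoal : μ * (f s - deriv f s * s) ≤ μ * (-((1 - 1/μ) * lam * ρ)) := by
      have e : μ * (-((1 - 1/μ) * lam * ρ)) = -((μ - 1) * lam * ρ) := by
        field_simp
      rw [e]
      nlinarith [mul_nonneg (sub_nonneg.2 hμ.le) (sub_nonneg.2 h4)]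
    exact le_of_mul_le_mul_left hgoal hμ0
  -- pointwise bound on [0,β]
  have hpt1 : ∀ t ∈ Icc (0:ℝ) β, h t ≤ g t * (ρ * f ρ) := by
    intro t ht
    have ht2 : t ∈ Icc (0:ℝ) (1/2) := ⟨ht.1, le_trans ht.2 hβhalf⟩
    have ht1 : t ∈ Icc (0:ℝ) 1 := ⟨ht.1, le_trans ht2.2 (by norm_num)⟩
    have hg0 := hgnonneg t ht1
    have hs0 : 0 ≤ u t := hupos t ht2
    have hsN : u t ≤ N := husup t ht1
    rcases le_or_gt (u t) ρ with hc | hc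
    · have hfu : f (u t) ≤ f ρ := hfmono hs0 hρ0.le hc
      have hfu0 : 0 ≤ f (u t) := le_trans hf0 (hfmono (le_refl (0:ℝ)) hs0 hs0)
      have hd0 : 0 ≤ deriv f (u t) := hf'nonneg _ hs0
      have hmain : u t * (f (u t) - deriv f (u t) * u t) ≤ ρ * f ρ := by
        have ha : 0 ≤ deriv f (u t) * u t * u t := by positivity
        have hb : u t * f (u t) ≤ ρ * f ρ := mul_le_mul hc hfu hfu0 hρ0.le
        nlinarith [ha, hb]
      rw [hh]
      exact mul_le_mul_of_nonneg_left hmain hg0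
    · have hk := hkey (u t) hc.le (le_trans hsN huR.le)
      have hneg : u t * (f (u t) - deriv f (u t) * u t) ≤ 0 :=
        mul_nonpos_of_nonneg_of_nonpos hs0
          (le_trans hk (by nlinarith [mul_pos (mul_pos hν hlam) hρ0]))
      have h2 : h t ≤ 0 := by
        rw [hh]; exact mul_nonpos_of_nonneg_of_nonpos hg0 hneg
      exact le_trans h2 (mul_nonneg hg0 (by positivity))
  -- pointwise bound on [β,1/2]
  have hpt2 : ∀ t ∈ Icc β (1/2:ℝ), h t ≤ -(g t * (lam * (1 - 1/μ) * ρ^2)) := by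
    intro t ht
    have htI : t ∈ Icc (0:ℝ) (1/2) := ⟨le_trans hβ0.le ht.1, ht.2⟩
    have ht1 : t ∈ Icc (0:ℝ) 1 := ⟨htI.1, le_trans htI.2 (by norm_num)⟩
    have hg0 := hgnonneg t ht1
    have hβI : β ∈ Icc (0:ℝ) (1/2) := ⟨hβ0.le, hβhalf⟩
    have huβ : ρ ≤ u t := by
      have h1 := huharn β hβI
      have h2 := humono hβI htI ht.1
      have h3 : ρ ≤ phi β * N := by
        rw [hρdef]; nlinarith [hur]
      linarith
    have hk := hkey (u t) huβ (le_trans (husup t ht1) huR.le)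
    have hc0 : (0:ℝ) < (1 - 1/μ) * lam * ρ := by positivity
    have hs0 : 0 ≤ u t := le_trans hρ0.le huβ
    have step1 : u t * (f (u t) - deriv f (u t) * u t) ≤ ρ * (-((1 - 1/μ) * lam * ρ)) := by
      calc u t * (f (u t) - deriv f (u t) * u t)
          ≤ u t * (-((1 - 1/μ) * lam * ρ)) := mul_le_mul_of_nonneg_left hk hs0
        _ ≤ ρ * (-((1 - 1/μ) * lam * ρ)) :=
            mul_le_mul_of_nonpos_right huβ (neg_nonpos.2 hc0.le)
    have step2 : h t ≤ g t * (ρ * (-((1 - 1/μ) * lam * ρ))) := by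
      rw [hh]; exact mul_le_mul_of_nonneg_left step1 hg0
    calc h t ≤ g t * (ρ * (-((1 - 1/μ) * lam * ρ))) := step2
      _ = -(g t * (lam * (1 - 1/μ) * ρ^2)) := by ring
  -- rewrite the quadratic form as ∫ h
  have eq1 : (fun t => f (u t) * g t * u t) = fun t => g t * (f (u t) * u t) := by
    funext t; ring
  have eq2 : (fun t => deriv f (u t) * g t * u t ^ 2)
      = fun t => g t * (deriv f (u t) * u t ^ 2) := by
    funext t; ring
  have hInt1 : IntervalIntegrable (fun t => g t * (f (u t) * u t)) MeasureTheory.volume 0 1 :=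
    keyI 0 1 _ le_rfl (by norm_num) le_rfl ((hfc.comp_continuousOn hucont).mul hucont)
  have hInt2 : IntervalIntegrable (fun t => g t * (deriv f (u t) * u t ^ 2))
      MeasureTheory.volume 0 1 :=
    keyI 0 1 _ le_rfl (by norm_num) le_rfl
      ((hf'c.comp_continuousOn hucont).mul (hucont.pow 2))
  have hmain : (∫ t in (0:ℝ)..1, deriv u t ^ 2)
      - (∫ t in (0:ℝ)..1, deriv f (u t) * g t * u t ^ 2) = ∫ t in (0:ℝ)..1, h t := by
    rw [hNehari, eq1, eq2, ← intervalIntegral.integral_sub hInt1 hInt2]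
    apply intervalIntegral.integral_congr
    intro t _
    rw [hh]; ring
  -- symmetry: ∫₀¹ h = 2 ∫₀^½ h
  have hsym : ∫ t in (1/2:ℝ)..1, h t = ∫ t in (0:ℝ)..(1/2:ℝ), h t := by
    have hc : (∫ x in (0:ℝ)..(1/2:ℝ), h (1 - x)) = ∫ x in (1:ℝ)-(1/2:ℝ)..(1:ℝ)-(0:ℝ), h x :=
      intervalIntegral.integral_comp_sub_left h 1
    rw [show (1:ℝ)-(1/2:ℝ) = 1/2 by norm_num, show (1:ℝ)-(0:ℝ) = 1 by norm_num] at hc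
    rw [← hc]
    apply intervalIntegral.integral_congr
    intro t ht
    rw [uIcc_of_le (by norm_num : (0:ℝ) ≤ 1/2)] at ht
    have ht1 : t ∈ Icc (0:ℝ) 1 := ⟨ht.1, le_trans ht.2 (by norm_num)⟩
    rw [hh]
    simp only
    rw [← hgsymm t ht, ← husymm t ht1]
  have hsplit : ∫ t in (0:ℝ)..1, h t
      = (∫ t in (0:ℝ)..(1/2:ℝ), h t) + ∫ t in (1/2:ℝ)..1, h t :=
    (intervalIntegral.integral_add_adjacent_intervals
      (hIh 0 (1/2) le_rfl (by norm_num) (by norm_num))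
      (hIh (1/2) 1 (by norm_num) (by norm_num) le_rfl)).symm
  -- split [0,1/2] at β and bound
  have hsplit2 : ∫ t in (0:ℝ)..(1/2:ℝ), h t
      = (∫ t in (0:ℝ)..β, h t) + ∫ t in β..(1/2:ℝ), h t :=
    (intervalIntegral.integral_add_adjacent_intervals
      (hIh 0 β le_rfl hβ0.le (by linarith))
      (hIh β (1/2) hβ0.le hβhalf (by norm_num))).symm
  have hb1 : ∫ t in (0:ℝ)..β, h t ≤ Btil * (ρ * f ρ) := by
    have hmono := intervalIntegral.integral_mono_on hβ0.le
      (hIh 0 β le_rfl hβ0.le (by linarith))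
      (keyI 0 β (fun _ => ρ * f ρ) le_rfl hβ0.le (by linarith) continuousOn_const) hpt1
    have e : ∫ t in (0:ℝ)..β, g t * (ρ * f ρ) = Btil * (ρ * f ρ) := by
      rw [hBtil, ← intervalIntegral.integral_mul_const]
    linarith [hmono, e.ge]
  have hb2 : ∫ t in β..(1/2:ℝ), h t ≤ -(Ctil * (lam * (1 - 1/μ) * ρ^2)) := by
    have hmono := intervalIntegral.integral_mono_on hβhalf
      (hIh β (1/2) hβ0.le hβhalf (by norm_num))
      ((keyI β (1/2) (fun _ => lam * (1 - 1/μ) * ρ^2) hβ0.le hβhalf (by norm_num)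
        continuousOn_const).neg) hpt2
    simp only [Pi.neg_apply] at hmono
    have e : ∫ t in β..(1/2:ℝ), -(g t * (lam * (1 - 1/μ) * ρ^2))
        = -(Ctil * (lam * (1 - 1/μ) * ρ^2)) := by
      rw [intervalIntegral.integral_neg, hCtil, ← intervalIntegral.integral_mul_const]
    linarith [hmono, e.ge]
  -- put everything together
  have hfinal : ∫ t in (0:ℝ)..1, h t
      ≤ 2 * (Btil * (ρ * f ρ) - Ctil * (lam * (1 - 1/μ) * ρ^2)) := by
    rw [hsplit, hsym, hsplit2]
    linarith
  have hrhs : 2 * r * phi β * (Btil * f ρ - lam * Ctil * (1 - 1/μ) * ρ)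
      = 2 * (Btil * (ρ * f ρ) - Ctil * (lam * (1 - 1/μ) * ρ^2)) := by
    rw [hρdef]; ring
  rw [hmain, hrhs]
  exact hfinal
end

section
/- Assume (H4): g(t) = 0 for all t ∈ [0,β]; C̃ = ∫_β^{1/2} g(t) dt > 0; and there exists a continuous function θ̃ : [rφ(β), R] → ℝ with θ̃(t) > 0 for all t ∈ [rφ(β), R] such that t f'(t) − f(t) ≥ θ̃(t) for all t ∈ [rφ(β), R]. Let u ∈ K satisfy r < ‖u‖ < R and the Nehari constraint ∫₀¹ u'(t)² dt = ∫₀¹ f(u(t)) g(t) u(t) dt. Then ∫₀¹ u'(t)² dt − ∫₀¹ f'(u(t)) g(t) u(t)² dt ≤ −2 C̃ r φ(β) · min_{s ∈ [rφ(β), R]} θ̃(s) < 0. -/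
/-!
On `[β, 1 - β]` the cone inequality gives `u ≥ φ(β)‖u‖ > rφ(β)`, and Cauchy–Schwarz on `u'` over
`[0, 1/2]` gives `u ≤ u(1/2) ≤ ‖u‖ < R`, so there `t f'(t) - f(t) ≥ m := min θ̃ > 0` at `t = u`;
off `[β, 1 - β]` the weight `g` vanishes. By the Nehari constraint,
`E''(u)(u,u) = -∫ g u (u f'(u) - f(u)) ≤ -rφ(β) m ∫₀¹ g = -2 C̃ rφ(β) m`.
-/

open Set

open MeasureTheory

section Integrals

variable {a b : ℝ}

theorem sq_integral_le_mul_integral_sq {v : ℝ → ℝ} (hab : a ≤ b)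
    (hv : IntervalIntegrable v volume a b)
    (hv2 : IntervalIntegrable (fun t => v t ^ 2) volume a b) :
    (∫ t in a..b, v t) ^ 2 ≤ (b - a) * ∫ t in a..b, v t ^ 2 := by
  set A := ∫ t in a..b, v t
  -- `c ↦ ∫ (c - v)²` is a nonnegative quadratic polynomial, so its discriminant is `≤ 0`.
  have hquad : ∀ c : ℝ, 0 ≤ (b - a) * (c * c) + (-2 * A) * c + ∫ t in a..b, v t ^ 2 := by
    intro c
    have hexp : ∫ t in a..b, (c - v t) ^ 2
        = (b - a) * (c * c) + (-2 * A) * c + ∫ t in a..b, v t ^ 2 := by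
      simp only [sub_sq]
      rw [intervalIntegral.integral_add (intervalIntegrable_const.sub (hv.const_mul _)) hv2,
        intervalIntegral.integral_sub intervalIntegrable_const (hv.const_mul _),
        intervalIntegral.integral_const, intervalIntegral.integral_const_mul, smul_eq_mul]
      ring
    exact hexp ▸ intervalIntegral.integral_nonneg hab fun t _ => sq_nonneg _
  have hdisc := discrim_le_zero hquad
  rw [discrim] at hdisc
  linarith

theorem sq_sub_le_mul_integral_deriv_sq {u : ℝ → ℝ} (hab : a ≤ b)
    (hu : ∀ t ∈ Icc a b, DifferentiableAt ℝ u t) (hu' : ContinuousOn (deriv u) (Icc a b)) :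
    (u b - u a) ^ 2 ≤ (b - a) * ∫ t in a..b, deriv u t ^ 2 := by
  rw [← uIcc_of_le hab] at hu hu'
  rw [← intervalIntegral.integral_deriv_eq_sub hu hu'.intervalIntegrable]
  exact sq_integral_le_mul_integral_sq hab hu'.intervalIntegrable (hu'.pow 2).intervalIntegrable

theorem intervalIntegrable_mul_of_integrableOn_Icc {g c : ℝ → ℝ} (hab : a ≤ b)
    (hg : IntegrableOn g (Icc a b)) (hc : ContinuousOn c (Icc a b)) :
    IntervalIntegrable (fun t => g t * c t) volume a b :=
  (intervalIntegrable_iff_integrableOn_Icc_of_le hab).2 (hg.mul_continuousOn hc isCompact_Icc)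

end Integrals

theorem IsCompact.sInf_image_pos {α : Type*} [TopologicalSpace α] {s : Set α} {θ : α → ℝ}
    (hs : IsCompact s) (hne : s.Nonempty) (hθ : ContinuousOn θ s) (hpos : ∀ t ∈ s, 0 < θ t) :
    0 < sInf (θ '' s) := by
  obtain ⟨t, ht, heq⟩ := (hs.image_of_continuousOn hθ).sInf_mem (hne.image θ)
  exact heq ▸ hpos t ht

namespace memK

variable {u : ℝ → ℝ}

theorem continuousOn_s16 (hu : memK u) : ContinuousOn u (Icc 0 1) :=
  fun t ht => (hu.1 t ht).continuousAt.continuousWithinAt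

theorem exists_eq_apply (hu : memK u) {β t : ℝ} (hβ : 0 ≤ β) (ht : t ∈ Icc β (1 - β)) :
    ∃ s ∈ Icc β (1 / 2), u s = u t := by
  obtain ⟨-, -, -, -, hsymm, -⟩ := hu
  rcases le_or_gt t (1 / 2) with h | h
  · exact ⟨t, ⟨ht.1, h⟩, rfl⟩
  · refine ⟨1 - t, ⟨by linarith [ht.2], by linarith⟩, ?_⟩
    exact (hsymm t ⟨by linarith [ht.1], by linarith [ht.2]⟩).symm

theorem apply_half_le_normH (hu : memK u) : u (1 / 2) ≤ normH u := by
  obtain ⟨hdiff, hcont, hu0, -⟩ := hu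
  have hhalf : Icc (0 : ℝ) (1 / 2) ⊆ Icc 0 1 := Icc_subset_Icc le_rfl (by norm_num)
  have hsq := sq_sub_le_mul_integral_deriv_sq (by norm_num) (fun t ht => hdiff t (hhalf ht))
    (hcont.mono hhalf)
  have hsplit : ∫ t in (0 : ℝ)..1 / 2, deriv u t ^ 2 ≤ ∫ t in (0 : ℝ)..1, deriv u t ^ 2 := by
    refine intervalIntegral.integral_mono_interval le_rfl (by norm_num) (by norm_num)
      (Filter.Eventually.of_forall fun t => sq_nonneg _) ?_
    exact (hcont.pow 2).intervalIntegrable_of_Icc zero_le_one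
  have hnonneg : 0 ≤ ∫ t in (0 : ℝ)..1 / 2, deriv u t ^ 2 :=
    intervalIntegral.integral_nonneg (by norm_num) fun t _ => sq_nonneg _
  rw [hu0, sub_zero] at hsq
  exact (le_abs_self _).trans (Real.abs_le_sqrt (by linarith))

theorem apply_mem_Icc (hu : memK u) {β t : ℝ} (hβ : β ∈ Icc 0 (1 / 2)) (ht : t ∈ Icc β (1 - β)) :
    u t ∈ Icc (phi β * normH u) (normH u) := by
  obtain ⟨s, hs, hst⟩ := hu.exists_eq_apply hβ.1 ht
  have hs' : s ∈ Icc (0 : ℝ) (1 / 2) := ⟨hβ.1.trans hs.1, hs.2⟩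
  have hhalf := hu.apply_half_le_normH
  obtain ⟨-, -, -, -, -, hmono, hcone⟩ := hu
  rw [← hst]
  exact ⟨(hcone β hβ).trans (hmono hβ hs' hs.1),
    (hmono hs' ⟨by norm_num, le_rfl⟩ hs.2).trans hhalf⟩

end memK

section Weight

variable {g : ℝ → ℝ}

theorem eq_zero_of_notMem_Icc_of_symm {β t : ℝ}
    (hsymm : ∀ t ∈ Icc (0 : ℝ) (1 / 2), g t = g (1 - t)) (hg0 : ∀ t ∈ Icc 0 β, g t = 0)
    (ht : t ∈ Icc 0 1) (htβ : t ∉ Icc β (1 - β)) : g t = 0 := by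
  rcases le_or_gt β t with h | h
  · have h1t : 1 - t < β := by
      by_contra! h'
      exact htβ ⟨h, by linarith⟩
    rw [← sub_sub_cancel 1 t, ← hsymm (1 - t) ⟨by linarith [ht.2], by linarith⟩]
    exact hg0 _ ⟨by linarith [ht.2], h1t.le⟩
  · exact hg0 t ⟨ht.1, h.le⟩

theorem integral_zero_one_eq_two_mul_of_symm {β : ℝ} (hβ : β ∈ Icc (0 : ℝ) (1 / 2))
    (hg : IntegrableOn g (Icc 0 1)) (hsymm : ∀ t ∈ Icc (0 : ℝ) (1 / 2), g t = g (1 - t))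
    (hg0 : ∀ t ∈ Icc 0 β, g t = 0) :
    ∫ t in (0 : ℝ)..1, g t = 2 * ∫ t in β..1 / 2, g t := by
  have hint : ∀ a b, 0 ≤ a → a ≤ b → b ≤ 1 → IntervalIntegrable g volume a b :=
    fun a b ha hab hb =>
      (intervalIntegrable_iff_integrableOn_Icc_of_le hab).2 (hg.mono_set (Icc_subset_Icc ha hb))
  have hzero : ∫ t in (0 : ℝ)..β, g t = 0 := by
    rw [intervalIntegral.integral_congr (g := fun _ => 0) fun t ht =>
      hg0 t (by rwa [uIcc_of_le hβ.1] at ht)]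
    simp
  have hreflect : ∫ t in (1 / 2 : ℝ)..1, g t = ∫ t in (0 : ℝ)..1 / 2, g t := by
    rw [intervalIntegral.integral_congr (g := fun t => g (1 - t)) fun t ht => ?_,
      intervalIntegral.integral_comp_sub_left g 1]
    · norm_num
    · rw [uIcc_of_le (by norm_num)] at ht
      have h1t : 1 - t ∈ Icc (0 : ℝ) (1 / 2) := ⟨by linarith [ht.2], by linarith [ht.1]⟩
      simpa only [sub_sub_cancel] using (hsymm (1 - t) h1t).symm
  rw [← intervalIntegral.integral_add_adjacent_intervals (b := 1 / 2) (hint _ _ le_rfl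
      (by norm_num) (by norm_num)) (hint _ _ (by norm_num) (by norm_num) le_rfl), hreflect,
    ← intervalIntegral.integral_add_adjacent_intervals (hint _ _ le_rfl hβ.1 (by linarith [hβ.2]))
      (hint _ _ hβ.1 hβ.2 (by norm_num)), hzero]
  ring

end Weight

theorem integral_mul_sub_deriv_mul_sq_le {f f' g u : ℝ → ℝ} {s : Set ℝ} {a b c m : ℝ}
    (hab : a ≤ b) (hf : Continuous f) (hf' : Continuous f') (hu : ContinuousOn u (Icc a b))
    (hg : IntegrableOn g (Icc a b)) (hg_nonneg : ∀ t ∈ Icc a b, 0 ≤ g t)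
    (hg_zero : ∀ t ∈ Icc a b, t ∉ s → g t = 0) (hc : 0 ≤ c) (hm : 0 ≤ m)
    (hs : ∀ t ∈ s, c ≤ u t ∧ m ≤ u t * f' (u t) - f (u t)) :
    (∫ t in a..b, f (u t) * g t * u t) - ∫ t in a..b, f' (u t) * g t * u t ^ 2 ≤
      -(c * m) * ∫ t in a..b, g t := by
  have hint₁ : IntervalIntegrable (fun t => f (u t) * g t * u t) volume a b := by
    convert intervalIntegrable_mul_of_integrableOn_Icc hab hg
      ((hf.comp_continuousOn hu).mul hu) using 2 with t
    simp only [Pi.mul_apply, Function.comp_apply]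
    ring
  have hint₂ : IntervalIntegrable (fun t => f' (u t) * g t * u t ^ 2) volume a b := by
    convert intervalIntegrable_mul_of_integrableOn_Icc hab hg
      ((hf'.comp_continuousOn hu).mul (hu.pow 2)) using 2 with t
    simp only [Pi.mul_apply, Pi.pow_apply, Function.comp_apply]
    ring
  have hpt : ∀ t ∈ Icc a b, f (u t) * g t * u t - f' (u t) * g t * u t ^ 2 ≤ g t * -(c * m) := by
    intro t ht
    by_cases hts : t ∈ s
    · obtain ⟨hcu, hmu⟩ := hs t hts
      have : c * m ≤ u t * (u t * f' (u t) - f (u t)) := mul_le_mul hcu hmu hm (hc.trans hcu)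
      nlinarith [mul_le_mul_of_nonneg_left this (hg_nonneg t ht)]
    · simp [hg_zero t ht hts]
  rw [← intervalIntegral.integral_sub hint₁ hint₂, mul_comm, ← intervalIntegral.integral_mul_const]
  exact intervalIntegral.integral_mono_on hab (hint₁.sub hint₂)
    (((intervalIntegrable_iff_integrableOn_Icc_of_le hab).2 hg).mul_const _) hpt

theorem second_derivative_negative_of_H4_general
    (f : ℝ → ℝ) (hf : ContDiff ℝ 1 f)
    (g : ℝ → ℝ) (hgnonneg : ∀ t ∈ Icc (0:ℝ) 1, 0 ≤ g t)
    (hgbdd : ∃ M : ℝ, ∀ t ∈ Icc (0:ℝ) 1, g t ≤ M)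
    (hgmeas : Measurable g)
    (hgsymm : ∀ t ∈ Icc (0:ℝ) (1/2), g t = g (1 - t))
    (r R : ℝ) (hr : 0 < r) (hrR : r < R)
    (β : ℝ) (hβ : β ∈ Ioo (0:ℝ) (1/4))
    (Ctil : ℝ) (hCtil : Ctil = ∫ t in β..(1/2:ℝ), g t) (hCpos : 0 < Ctil)
    -- condition (H4)
    (hg0 : ∀ t ∈ Icc (0:ℝ) β, g t = 0)
    (θtil : ℝ → ℝ) (hθcont : ContinuousOn θtil (Icc (r * phi β) R))
    (hθpos : ∀ t ∈ Icc (r * phi β) R, 0 < θtil t)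
    (hAR : ∀ t ∈ Icc (r * phi β) R, θtil t ≤ t * deriv f t - f t)
    -- u in the cone, localized, satisfying the Nehari constraint
    (u : ℝ → ℝ) (hu : memK u) (hur : r < normH u) (huR : normH u < R)
    (hNehari : (∫ t in (0:ℝ)..1, deriv u t ^ 2) = ∫ t in (0:ℝ)..1, f (u t) * g t * u t) :
    (∫ t in (0:ℝ)..1, deriv u t ^ 2) - (∫ t in (0:ℝ)..1, deriv f (u t) * g t * u t ^ 2) ≤
      -2 * Ctil * r * phi β * sInf (θtil '' Icc (r * phi β) R) ∧
    -2 * Ctil * r * phi β * sInf (θtil '' Icc (r * phi β) R) < 0 := by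
  obtain ⟨M, hM⟩ := hgbdd
  obtain ⟨hβ0, hβ4⟩ := hβ
  have hβ' : β ∈ Icc (0 : ℝ) (1 / 2) := ⟨hβ0.le, by linarith⟩
  have hφβ : 0 < phi β := by unfold phi; nlinarith
  have hφβ1 : phi β < 1 := by unfold phi; nlinarith
  have hg_int : IntegrableOn g (Icc 0 1) :=
    Measure.integrableOn_of_bounded (by simp) hgmeas.aestronglyMeasurable (M := M)
      (ae_restrict_of_forall_mem measurableSet_Icc fun t ht => by
        rw [Real.norm_of_nonneg (hgnonneg t ht)]; exact hM t ht)
  set S := Icc (r * phi β) R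
  set m := sInf (θtil '' S)
  have hm_pos : 0 < m := isCompact_Icc.sInf_image_pos
    (nonempty_Icc.2 ((mul_lt_of_lt_one_right hr hφβ1).le.trans hrR.le)) hθcont hθpos
  have hm_le : ∀ t ∈ S, m ≤ θtil t := fun t ht =>
    csInf_le (isCompact_Icc.image_of_continuousOn hθcont).bddBelow (mem_image_of_mem θtil ht)
  have hu_S : ∀ t ∈ Icc β (1 - β), u t ∈ S := fun t ht => by
    obtain ⟨hlow, hup⟩ := hu.apply_mem_Icc hβ' ht
    exact ⟨by nlinarith, by linarith⟩
  have hkey := integral_mul_sub_deriv_mul_sq_le zero_le_one hf.continuous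
    (hf.continuous_deriv le_rfl) hu.continuousOn_s16 hg_int hgnonneg
    (fun t ht => eq_zero_of_notMem_Icc_of_symm hgsymm hg0 ht) (mul_pos hr hφβ).le hm_pos.le
    fun t ht => ⟨(hu_S t ht).1, (hm_le _ (hu_S t ht)).trans (hAR _ (hu_S t ht))⟩
  rw [integral_zero_one_eq_two_mul_of_symm hβ' hg_int hgsymm hg0, ← hCtil] at hkey
  refine ⟨hNehari ▸ hkey.trans_eq (by ring), ?_⟩
  have hprod := mul_pos (mul_pos (mul_pos hCpos hr) hφβ) hm_pos
  linarith

/-- Under condition (H4), for every `u` in the cone satisfying the Nehari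
constraint with `r < ‖u‖ < R`, the quantity `E''(u)(u,u)` is negative, quantitatively. -/
theorem second_derivative_negative_of_H4
    (f : ℝ → ℝ) (hf : ContDiff ℝ 1 f)
    (hfmono : MonotoneOn f (Ici (0:ℝ)))
    (hf0 : 0 ≤ f 0) (hfpos : ∀ t : ℝ, 0 < t → 0 < f t)
    (g : ℝ → ℝ) (hgnonneg : ∀ t ∈ Icc (0:ℝ) 1, 0 ≤ g t)
    (hgbdd : ∃ M : ℝ, ∀ t ∈ Icc (0:ℝ) 1, g t ≤ M)
    (hgmeas : Measurable g)
    (hgmono : MonotoneOn g (Icc (0:ℝ) (1/2)))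
    (hgsymm : ∀ t ∈ Icc (0:ℝ) (1/2), g t = g (1 - t))
    (r R : ℝ) (hr : 0 < r) (hrR : r < R)
    (β : ℝ) (hβ : β ∈ Ioo (0:ℝ) (1/4))
    (Ctil : ℝ) (hCtil : Ctil = ∫ t in β..(1/2:ℝ), g t) (hCpos : 0 < Ctil)
    -- condition (H4)
    (hg0 : ∀ t ∈ Icc (0:ℝ) β, g t = 0)
    (θtil : ℝ → ℝ) (hθcont : ContinuousOn θtil (Icc (r * phi β) R))
    (hθpos : ∀ t ∈ Icc (r * phi β) R, 0 < θtil t)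
    (hAR : ∀ t ∈ Icc (r * phi β) R, θtil t ≤ t * deriv f t - f t)
    -- u in the cone, localized, satisfying the Nehari constraint
    (u : ℝ → ℝ) (hu : memK u) (hur : r < normH u) (huR : normH u < R)
    (hNehari : (∫ t in (0:ℝ)..1, deriv u t ^ 2) = ∫ t in (0:ℝ)..1, f (u t) * g t * u t) :
    (∫ t in (0:ℝ)..1, deriv u t ^ 2) - (∫ t in (0:ℝ)..1, deriv f (u t) * g t * u t ^ 2) ≤
      -2 * Ctil * r * phi β * sInf (θtil '' Icc (r * phi β) R) ∧
    -2 * Ctil * r * phi β * sInf (θtil '' Icc (r * phi β) R) < 0 :=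
  second_derivative_negative_of_H4_general f hf g hgnonneg hgbdd hgmeas hgsymm r R hr hrR β hβ Ctil
    hCtil hCpos hg0 θtil hθcont hθpos hAR u hu hur huR hNehari
end
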